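/- arXiv:2604.11330 — 6 statements merged into one kernel-verified Lean document; each statement's English description precedes it below -/
import Mathlib

section
/- Let k ≥ 1 and let π : G → H be a homomorphism of finite abelian groups (written additively), and set X = {g ∈ G : ord(g) ∤ k and ord(π(g)) ∣ k}. Suppose ℓ is a prime such that ker π is an ℓ-group. Let G′ and H′ be the Sylow ℓ-subgroups of G and H respectively, let π′ : G′ → H′ be the restriction of π, and set X′ = {s ∈ G′ : ord(s) ∤ k and ord(π′(s)) ∣ k}. Then X ≠ ∅ ⟺ X′ ≠ ∅ ⟺ (ker π′) ∩ ℓʳG′ ≠ {0}, where r = ν_ℓ(k) is the ℓ-adic valuation of k. -/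
/-!
Everything is governed by the `ℓ`-adic valuation `r` of `k`. For `s` of `ℓ`-power order,
`ord s ∣ k` iff `ℓ ^ r • s = 0`, and likewise for `π s`, so `s ∈ X′` exactly when `ℓ ^ r • s` is
a nonzero element of `ker π′`. To pass from `X` to `X′`, replace `g ∈ X` by its `ℓ`-part
`b • g`, where `b` is the prime-to-`ℓ` part of `ord g`: since `ker π` is an `ℓ`-group, `b` divides
`ord (π g)`, hence `k`, so `ord g ∤ k` forces the `ℓ`-part `ℓ ^ a` of `ord g` not to divide `k`.
-/

section PrimePowerOrder

variable {ℓ k a : ℕ}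

theorem addOrderOf_dvd_iff_pow_factorization_nsmul_eq_zero {M : Type*} [AddMonoid M]
    (hℓ : ℓ.Prime) (hk : k ≠ 0) {x : M} (hx : addOrderOf x = ℓ ^ a) :
    addOrderOf x ∣ k ↔ ℓ ^ k.factorization ℓ • x = 0 := by
  rw [← addOrderOf_dvd_iff_nsmul_eq_zero, hx, hℓ.pow_dvd_iff_le_factorization hk,
    Nat.pow_dvd_pow_iff_le_right hℓ.one_lt]

theorem exists_addOrderOf_map_eq_pow {A B : Type*} [AddMonoid A] [AddMonoid B] (f : A →+ B)
    (hℓ : ℓ.Prime) {x : A} (hx : addOrderOf x = ℓ ^ a) : ∃ c, addOrderOf (f x) = ℓ ^ c := by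
  obtain ⟨c, -, hc⟩ := (Nat.dvd_prime_pow hℓ).1 (hx ▸ addOrderOf_map_dvd f x)
  exact ⟨c, hc⟩

theorem not_addOrderOf_dvd_and_addOrderOf_map_dvd_iff {A B : Type*} [AddGroup A] [AddGroup B]
    (f : A →+ B) (hℓ : ℓ.Prime) (hk : k ≠ 0) {x : A} (hx : addOrderOf x = ℓ ^ a) :
    (¬ addOrderOf x ∣ k ∧ addOrderOf (f x) ∣ k) ↔
      (ℓ ^ k.factorization ℓ • x ≠ 0 ∧ ℓ ^ k.factorization ℓ • x ∈ f.ker) := by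
  obtain ⟨c, hc⟩ := exists_addOrderOf_map_eq_pow f hℓ hx
  rw [addOrderOf_dvd_iff_pow_factorization_nsmul_eq_zero hℓ hk hx,
    addOrderOf_dvd_iff_pow_factorization_nsmul_eq_zero hℓ hk hc, AddMonoidHom.mem_ker, map_nsmul]

end PrimePowerOrder

section KernelPrimaryComponent

variable {A B : Type*} [AddGroup A] [AddGroup B] {ℓ k : ℕ} (f : A →+ B)

theorem exists_addOrderOf_dvd_pow_mul_addOrderOf_map
    (hker : ∀ g ∈ f.ker, ∃ n : ℕ, addOrderOf g = ℓ ^ n) (x : A) :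
    ∃ c, addOrderOf x ∣ ℓ ^ c * addOrderOf (f x) := by
  obtain ⟨c, hc⟩ := hker (addOrderOf (f x) • x) (by
    rw [AddMonoidHom.mem_ker, map_nsmul, addOrderOf_nsmul_eq_zero])
  refine ⟨c, addOrderOf_dvd_of_nsmul_eq_zero ?_⟩
  rw [mul_nsmul', ← hc, addOrderOf_nsmul_eq_zero]

theorem exists_pow_addOrderOf_of_not_addOrderOf_dvd_of_addOrderOf_map_dvd
    (hℓ : ℓ.Prime) (hk : k ≠ 0) (hker : ∀ g ∈ f.ker, ∃ n : ℕ, addOrderOf g = ℓ ^ n) {x : A}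
    (hx : ¬ addOrderOf x ∣ k) (hfx : addOrderOf (f x) ∣ k) :
    ∃ y : A, (∃ a : ℕ, addOrderOf y = ℓ ^ a) ∧ ¬ addOrderOf y ∣ k ∧ addOrderOf (f y) ∣ k := by
  obtain ⟨c, hnc⟩ := exists_addOrderOf_dvd_pow_mul_addOrderOf_map f hker x
  set n := addOrderOf x
  have hn : n ≠ 0 := by
    intro hn
    have hfx0 : addOrderOf (f x) = 0 := by simpa [hn, hℓ.ne_zero] using hnc
    exact hk (Nat.eq_zero_of_zero_dvd (hfx0 ▸ hfx))
  have hcop : ℓ.Coprime (ordCompl[ℓ] n) := Nat.coprime_ordCompl hℓ hn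
  have hcompl : ordCompl[ℓ] n ∣ addOrderOf (f x) :=
    ((hcop.pow_left c).symm).dvd_of_dvd_mul_left ((Nat.ordCompl_dvd n ℓ).trans hnc)
  refine ⟨ordCompl[ℓ] n • x, ⟨_, addOrderOf_nsmul_addOrderOf_sub hn (Nat.ordProj_dvd n ℓ)⟩,
    fun hproj => hx ?_, ?_⟩
  · rw [addOrderOf_nsmul_addOrderOf_sub hn (Nat.ordProj_dvd n ℓ)] at hproj
    rw [← Nat.ordProj_mul_ordCompl_eq_self n ℓ]
    exact Nat.Coprime.mul_dvd_of_dvd_of_dvd (hcop.pow_left _) hproj (hcompl.trans hfx)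
  · rw [map_nsmul]
    exact (addOrderOf_smul_dvd _).trans hfx

end KernelPrimaryComponent

theorem X_nonempty_iff_X'_nonempty_iff_general
    {G H : Type*} [AddCommGroup G] [AddCommGroup H]
    (k : ℕ) (hk : 1 ≤ k) (ℓ : ℕ) (hℓ : ℓ.Prime) (π : G →+ H)
    (hker : ∀ g ∈ π.ker, ∃ n : ℕ, addOrderOf g = ℓ ^ n)
    (G' : AddSubgroup G) (H' : AddSubgroup H)
    (hG' : ∀ g : G, g ∈ G' ↔ ∃ n : ℕ, addOrderOf g = ℓ ^ n)
    (π' : G' →+ H') (hπ' : ∀ s : G', ((π' s : H)) = π (s : G)) :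
    ((∃ g : G, ¬ addOrderOf g ∣ k ∧ addOrderOf (π g) ∣ k) ↔
       (∃ s : G', ¬ addOrderOf s ∣ k ∧ addOrderOf (π' s) ∣ k)) ∧
    ((∃ s : G', ¬ addOrderOf s ∣ k ∧ addOrderOf (π' s) ∣ k) ↔
       π'.ker ⊓ (nsmulAddMonoidHom (ℓ ^ (k.factorization ℓ)) : G' →+ G').range ≠ ⊥) := by
  have hk0 : k ≠ 0 := by omega
  have hπ'_order (s : G') : addOrderOf (π' s) = addOrderOf (π s) := by
    rw [← AddSubgroup.addOrderOf_coe, hπ']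
  have hkey (s : G') : (¬ addOrderOf s ∣ k ∧ addOrderOf (π' s) ∣ k) ↔
      (ℓ ^ k.factorization ℓ • s ≠ 0 ∧ ℓ ^ k.factorization ℓ • s ∈ π'.ker) := by
    obtain ⟨a, ha⟩ := (hG' s).1 s.2
    rw [AddSubgroup.addOrderOf_coe] at ha
    exact not_addOrderOf_dvd_and_addOrderOf_map_dvd_iff π' hℓ hk0 ha
  refine ⟨⟨fun ⟨g, hg, hπg⟩ => ?_, fun ⟨s, hs, hπs⟩ => ?_⟩, ?_⟩
  · obtain ⟨y, hyG', hy, hπy⟩ :=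
      exists_pow_addOrderOf_of_not_addOrderOf_dvd_of_addOrderOf_map_dvd π hℓ hk0 hker hg hπg
    exact ⟨⟨y, (hG' y).2 hyG'⟩, by rwa [← AddSubgroup.addOrderOf_coe], by rwa [hπ'_order]⟩
  · exact ⟨s, by rwa [AddSubgroup.addOrderOf_coe], by rwa [← hπ'_order]⟩
  · simp only [hkey, ne_eq, AddSubgroup.eq_bot_iff_forall, AddSubgroup.mem_inf,
      AddMonoidHom.mem_range, nsmulAddMonoidHom_apply, not_forall]
    constructor
    · rintro ⟨s, hs0, hsker⟩
      exact ⟨_, ⟨hsker, s, rfl⟩, hs0⟩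
    · rintro ⟨_, ⟨hker', s, rfl⟩, hs0⟩
      exact ⟨s, hs0, hker'⟩

/-- Let `k ≥ 1`, `π : G → H` a homomorphism of finite abelian groups with
`ker π` an `ℓ`-group for a prime `ℓ`.  Let `G′`, `H′` be the Sylow `ℓ`-subgroups
(`ℓ`-primary components) of `G`, `H`, and `π′ : G′ → H′` the restriction of `π`.  With
`X = {g ∈ G : ord(g) ∤ k, ord(π(g)) ∣ k}` and `X′` defined analogously for `π′`, and
`r = ν_ℓ(k)`, we have `X ≠ ∅ ⟺ X′ ≠ ∅ ⟺ (ker π′) ∩ ℓʳG′ ≠ {0}`. -/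
theorem X_nonempty_iff_X'_nonempty_iff
    {G H : Type*} [AddCommGroup G] [AddCommGroup H] [Finite G] [Finite H]
    (k : ℕ) (hk : 1 ≤ k) (ℓ : ℕ) (hℓ : ℓ.Prime) (π : G →+ H)
    (hker : ∀ g ∈ π.ker, ∃ n : ℕ, addOrderOf g = ℓ ^ n)
    (G' : AddSubgroup G) (H' : AddSubgroup H)
    (hG' : ∀ g : G, g ∈ G' ↔ ∃ n : ℕ, addOrderOf g = ℓ ^ n)
    (hH' : ∀ h : H, h ∈ H' ↔ ∃ n : ℕ, addOrderOf h = ℓ ^ n)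
    (π' : G' →+ H') (hπ' : ∀ s : G', ((π' s : H)) = π (s : G)) :
    ((∃ g : G, ¬ addOrderOf g ∣ k ∧ addOrderOf (π g) ∣ k) ↔
       (∃ s : G', ¬ addOrderOf s ∣ k ∧ addOrderOf (π' s) ∣ k)) ∧
    ((∃ s : G', ¬ addOrderOf s ∣ k ∧ addOrderOf (π' s) ∣ k) ↔
       π'.ker ⊓ (nsmulAddMonoidHom (ℓ ^ (k.factorization ℓ)) : G' →+ G').range ≠ ⊥) :=
  X_nonempty_iff_X'_nonempty_iff_general k hk ℓ hℓ π hker G' H' hG' π' hπ'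
end

section
/- Let ℓ be a prime, k ≥ 1, and r = ν_ℓ(k) the ℓ-adic valuation of k. Let f : G → H be a surjective homomorphism of finite abelian ℓ-groups (written additively) whose kernel is cyclic of order ℓ, and set X = {g ∈ G : ord(g) ∤ k and ord(f(g)) ∣ k}. Then X ≠ ∅ if and only if |G/ℓʳG| = |H/ℓʳH|. -/
/-!
Put `N = ℓ ^ r`, so `ℓʳG = NG`. In an `ℓ`-group, `ord g ∣ k` iff `N • g = 0`, so an element of `X` is exactly
a `g` with `N • g` a nonzero element of `ker f`; hence `X ≠ ∅` iff `ker f ⊓ NG ≠ ⊥`, which for a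
kernel of prime order means `ker f ≤ NG`. Since `f` maps `NG` onto `NH`, the index of `NH` in `H`
is that of `NG ⊔ ker f` in `G`, and this equals the index of `NG` exactly when `ker f ≤ NG`.
-/

theorem addOrderOf_dvd_iff_ordProj_nsmul_eq_zero {A : Type*} [AddMonoid A] {ℓ k : ℕ}
    (hℓ : ℓ.Prime) (hk : k ≠ 0) {x : A} (hx : ∃ n : ℕ, addOrderOf x = ℓ ^ n) :
    addOrderOf x ∣ k ↔ ℓ ^ k.factorization ℓ • x = 0 := by
  obtain ⟨n, hx⟩ := hx
  rw [← addOrderOf_dvd_iff_nsmul_eq_zero, hx, Nat.pow_dvd_pow_iff_le_right hℓ.one_lt,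
    ← hℓ.pow_dvd_iff_le_factorization hk]

theorem AddMonoidHom.map_range_nsmulAddMonoidHom {G H : Type*} [AddCommGroup G] [AddCommGroup H]
    {f : G →+ H} (hf : Function.Surjective f) (n : ℕ) :
    (nsmulAddMonoidHom n : G →+ G).range.map f = (nsmulAddMonoidHom n : H →+ H).range := by
  have hcomm : f.comp (nsmulAddMonoidHom n) = (nsmulAddMonoidHom n).comp f := by
    ext g; exact map_nsmul f n g
  rw [AddMonoidHom.map_range, hcomm, AddMonoidHom.range_comp, f.range_eq_top_of_surjective hf,
    ← AddMonoidHom.range_eq_map]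

theorem AddSubgroup.le_of_inf_ne_bot_of_card_prime {G : Type*} [AddGroup G] {K S : AddSubgroup G}
    (hK : (Nat.card K).Prime) (h : K ⊓ S ≠ ⊥) : K ≤ S := by
  have : Finite K := Nat.finite_of_card_ne_zero hK.ne_zero
  have hcard : Nat.card ↥(K ⊓ S) = Nat.card K :=
    (hK.eq_one_or_self_of_dvd _ (AddSubgroup.card_dvd_of_le inf_le_left)).resolve_left
      (mt AddSubgroup.card_eq_one.mp h)
  exact inf_eq_left.mp (AddSubgroup.eq_of_le_of_card_ge inf_le_left hcard.ge)

theorem AddSubgroup.inf_ne_bot_iff_le_of_card_prime {G : Type*} [AddGroup G] {K S : AddSubgroup G}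
    (hK : (Nat.card K).Prime) : K ⊓ S ≠ ⊥ ↔ K ≤ S := by
  refine ⟨le_of_inf_ne_bot_of_card_prime hK, fun hle => ?_⟩
  rw [inf_eq_left.mpr hle]
  rintro rfl
  rw [AddSubgroup.card_bot] at hK
  exact Nat.not_prime_one hK

theorem AddSubgroup.index_map_eq_iff_ker_le {G H : Type*} [AddGroup G] [AddGroup H]
    {f : G →+ H} (hf : Function.Surjective f) (S : AddSubgroup G) [S.FiniteIndex] :
    (S.map f).index = S.index ↔ f.ker ≤ S := by
  refine ⟨fun h => ?_, S.index_map_eq hf⟩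
  rw [index_map, f.range_eq_top_of_surjective hf, index_top, mul_one] at h
  by_contra hker
  exact (index_strictAnti (left_lt_sup.mpr hker)).ne h

theorem AddMonoidHom.exists_nsmul_ne_zero_map_eq_zero_iff {G H : Type*} [AddCommGroup G]
    [AddGroup H] (f : G →+ H) (N : ℕ) :
    (∃ g : G, N • g ≠ 0 ∧ f (N • g) = 0) ↔ f.ker ⊓ (nsmulAddMonoidHom N : G →+ G).range ≠ ⊥ := by
  simp only [ne_eq, AddSubgroup.eq_bot_iff_forall, AddSubgroup.mem_inf, mem_ker, mem_range,
    nsmulAddMonoidHom_apply, not_forall]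
  constructor
  · rintro ⟨g, hg, hfg⟩
    exact ⟨N • g, ⟨hfg, g, rfl⟩, hg⟩
  · rintro ⟨_, ⟨hfx, g, rfl⟩, hx⟩
    exact ⟨g, hx, hfx⟩

theorem X_nonempty_iff_card_quotients_eq_general
    {G H : Type*} [AddCommGroup G] [AddCommGroup H] [Finite G]
    (ℓ : ℕ) (hℓ : ℓ.Prime) (k : ℕ) (hk : 1 ≤ k)
    (hG : ∀ g : G, ∃ n : ℕ, addOrderOf g = ℓ ^ n)
    (hH : ∀ h : H, ∃ n : ℕ, addOrderOf h = ℓ ^ n)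
    (f : G →+ H) (hf : Function.Surjective f)
    (hcard : Nat.card f.ker = ℓ) :
    (∃ g : G, ¬ addOrderOf g ∣ k ∧ addOrderOf (f g) ∣ k) ↔
      Nat.card (G ⧸ (nsmulAddMonoidHom (ℓ ^ (k.factorization ℓ)) : G →+ G).range) =
        Nat.card (H ⧸ (nsmulAddMonoidHom (ℓ ^ (k.factorization ℓ)) : H →+ H).range) := by
  have hk0 : k ≠ 0 := Nat.one_le_iff_ne_zero.mp hk
  have hGk (g : G) : addOrderOf g ∣ k ↔ ℓ ^ k.factorization ℓ • g = 0 :=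
    addOrderOf_dvd_iff_ordProj_nsmul_eq_zero hℓ hk0 (hG g)
  have hHk (h : H) : addOrderOf h ∣ k ↔ ℓ ^ k.factorization ℓ • h = 0 :=
    addOrderOf_dvd_iff_ordProj_nsmul_eq_zero hℓ hk0 (hH h)
  simp only [hGk, hHk, ← map_nsmul, ← ne_eq]
  rw [f.exists_nsmul_ne_zero_map_eq_zero_iff,
    AddSubgroup.inf_ne_bot_iff_le_of_card_prime (hcard ▸ hℓ), ← AddSubgroup.index_eq_card,
    ← AddSubgroup.index_eq_card, ← f.map_range_nsmulAddMonoidHom hf, eq_comm,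
    AddSubgroup.index_map_eq_iff_ker_le hf]

/-- Let `ℓ` be a prime, `k ≥ 1`, `r = ν_ℓ(k)`.  If `f : G → H` is a
surjective homomorphism of finite abelian `ℓ`-groups whose kernel is cyclic of order `ℓ`,
and `X = {g ∈ G : ord(g) ∤ k, ord(f(g)) ∣ k}`, then `X ≠ ∅ ⟺ |G/ℓʳG| = |H/ℓʳH|`. -/
theorem X_nonempty_iff_card_quotients_eq
    {G H : Type*} [AddCommGroup G] [AddCommGroup H] [Finite G] [Finite H]
    (ℓ : ℕ) (hℓ : ℓ.Prime) (k : ℕ) (hk : 1 ≤ k)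
    (hG : ∀ g : G, ∃ n : ℕ, addOrderOf g = ℓ ^ n)
    (hH : ∀ h : H, ∃ n : ℕ, addOrderOf h = ℓ ^ n)
    (f : G →+ H) (hf : Function.Surjective f)
    (hcyc : IsAddCyclic f.ker) (hcard : Nat.card f.ker = ℓ) :
    (∃ g : G, ¬ addOrderOf g ∣ k ∧ addOrderOf (f g) ∣ k) ↔
      Nat.card (G ⧸ (nsmulAddMonoidHom (ℓ ^ (k.factorization ℓ)) : G →+ G).range) =
        Nat.card (H ⧸ (nsmulAddMonoidHom (ℓ ^ (k.factorization ℓ)) : H →+ H).range) :=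
  X_nonempty_iff_card_quotients_eq_general ℓ hℓ k hk hG hH f hf hcard
end

section
/- Let 0 → κ → S →^{φ} S₀ → 0 be a short exact sequence of finite abelian 2-groups. If the sequence splits (i.e., φ admits a group-homomorphism right inverse), then |S[2]| = |S₀[2]|·|κ[2]|. Conversely, if |S[2]| = |S₀[2]|·|κ[2]| and moreover κ has no element of order 4 or S₀ has no element of order 4, then the sequence splits. -/
/-!
Restricting `φ` to 2-torsion gives `S[2] → S₀[2]` with kernel `κ[2]`, so the cardinality identity
holds exactly when every element of `S₀[2]` lifts to `S[2]`; a section maps `S₀[2]` into `S[2]`.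
Conversely, by the structure theorem `S₀` is a direct sum of cyclic groups, and a section exists
as soon as each generator `y` lifts to some `x` with `addOrderOf y • x = 0`. If `S₀` has exponent
`2` such lifts are the `2`-torsion lifts. If `κ` has exponent `2` and `y` has order `2 ^ m`, lift
`2 ^ (m - 1) • y` to `t ∈ S[2]` and `y` to any `s`: then `2 ^ (m - 1) • s - t ∈ κ`, so
`2 ^ m • s = 2 • t = 0`.
-/

section

variable {A B : Type*} [AddCommGroup A] [AddCommGroup B]

theorem two_nsmul_eq_zero_of_addOrderOf_ne_four (h2 : ∀ x : A, ∃ n : ℕ, addOrderOf x = 2 ^ n)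
    (h4 : ∀ x : A, addOrderOf x ≠ 4) (x : A) : 2 • x = 0 := by
  obtain ⟨n, hn⟩ := h2 x
  rw [← addOrderOf_dvd_iff_nsmul_eq_zero, hn]
  rcases Nat.lt_or_ge n 2 with hlt | hge
  · interval_cases n <;> norm_num
  · refine absurd ?_ (h4 (2 ^ (n - 2) • x))
    rw [addOrderOf_nsmul_of_dvd (by positivity) (hn ▸ pow_dvd_pow 2 (Nat.sub_le n 2)), hn,
      Nat.pow_div (Nat.sub_le n 2) two_pos, Nat.sub_sub_self hge]
    rfl

def twoTorsion (A : Type*) [AddCommGroup A] : AddSubgroup A :=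
  (nsmulAddMonoidHom 2 : A →+ A).ker

theorem mem_twoTorsion {x : A} : x ∈ twoTorsion A ↔ 2 • x = 0 := Iff.rfl

theorem two_nsmul_coe_twoTorsion (x : twoTorsion A) : 2 • (x : A) = 0 := x.2

def twoTorsionMap (φ : A →+ B) : twoTorsion A →+ twoTorsion B :=
  (φ.comp (twoTorsion A).subtype).codRestrict _ fun x => by
    rw [mem_twoTorsion, AddMonoidHom.comp_apply, AddSubgroup.coe_subtype, ← map_nsmul,
      two_nsmul_coe_twoTorsion, map_zero]

theorem card_ker_twoTorsionMap (φ : A →+ B) :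
    Nat.card (twoTorsionMap φ).ker = Nat.card (twoTorsion φ.ker) :=
  Nat.card_congr
    { toFun := fun x => ⟨⟨x.1.1, congrArg Subtype.val x.2⟩, Subtype.ext x.1.2⟩
      invFun := fun z => ⟨⟨z.1.1, congrArg Subtype.val z.2⟩, Subtype.ext z.1.2⟩
      left_inv := fun _ => rfl
      right_inv := fun _ => rfl }

theorem card_twoTorsion_eq_mul_iff [Finite A] [Finite B] (φ : A →+ B) :
    Nat.card (twoTorsion A) = Nat.card (twoTorsion B) * Nat.card (twoTorsion φ.ker) ↔
      Function.Surjective (twoTorsionMap φ) := by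
  rw [← card_ker_twoTorsionMap, ← (twoTorsionMap φ).ker.card_mul_index,
    AddSubgroup.index_ker, mul_comm, mul_left_inj' Nat.card_pos.ne',
    AddSubgroup.card_eq_iff_eq_top, AddMonoidHom.range_eq_top]

theorem surjective_twoTorsionMap_of_comp_eq_id {φ : A →+ B} {σ : B →+ A}
    (hσ : φ.comp σ = AddMonoidHom.id B) : Function.Surjective (twoTorsionMap φ) := fun y =>
  ⟨⟨σ y, by rw [mem_twoTorsion, ← map_nsmul, two_nsmul_coe_twoTorsion, map_zero]⟩,
    Subtype.ext (DFunLike.congr_fun hσ (y : B))⟩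

theorem exists_twoTorsion_lift {φ : A →+ B} (h : Function.Surjective (twoTorsionMap φ)) {y : B}
    (hy : 2 • y = 0) : ∃ x : A, 2 • x = 0 ∧ φ x = y := by
  obtain ⟨x, hx⟩ := h ⟨y, hy⟩
  exact ⟨x, x.2, congrArg Subtype.val hx⟩

theorem exists_lift_addOrderOf_nsmul_eq_zero_of_two_nsmul_eq_zero {φ : A →+ B}
    (h : Function.Surjective (twoTorsionMap φ)) {y : B} (hy : 2 • y = 0) :
    ∃ x : A, φ x = y ∧ addOrderOf y • x = 0 := by
  rcases eq_or_ne y 0 with rfl | hy0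
  · exact ⟨0, map_zero φ, nsmul_zero _⟩
  obtain ⟨x, hx, rfl⟩ := exists_twoTorsion_lift h hy
  exact ⟨x, rfl, by rwa [addOrderOf_eq_prime hy hy0]⟩

theorem exists_lift_addOrderOf_nsmul_eq_zero_of_ker {φ : A →+ B} (hφ : Function.Surjective φ)
    (hker : ∀ z ∈ φ.ker, 2 • z = 0) (h : Function.Surjective (twoTorsionMap φ)) {y : B} {m : ℕ}
    (hm : addOrderOf y = 2 ^ m) : ∃ x : A, φ x = y ∧ addOrderOf y • x = 0 := by
  rcases Nat.eq_zero_or_pos m with rfl | hm0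
  · exact ⟨0, by rwa [map_zero, eq_comm, ← AddMonoid.addOrderOf_eq_one_iff], nsmul_zero _⟩
  have h2m : 2 ^ m = 2 * 2 ^ (m - 1) := by rw [← pow_succ', Nat.sub_add_cancel hm0]
  obtain ⟨t, ht, htφ⟩ := exists_twoTorsion_lift h (y := 2 ^ (m - 1) • y)
    (by rw [smul_smul, ← h2m, ← hm, addOrderOf_nsmul_eq_zero])
  obtain ⟨s, rfl⟩ := hφ y
  have hk := hker (2 ^ (m - 1) • s - t)
    (by rw [AddMonoidHom.mem_ker, map_sub, map_nsmul, htφ, sub_self])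
  rw [smul_sub, ht, sub_zero] at hk
  exact ⟨s, rfl, by rw [hm, h2m, mul_smul, hk]⟩

theorem ZMod.exists_comp_eq_of_lift_one {n : ℕ} (φ : A →+ B) (f : ZMod n →+ B) {x : A}
    (hx : φ x = f 1) (hn : n • x = 0) : ∃ g : ZMod n →+ A, φ.comp g = f := by
  refine ⟨ZMod.lift n ⟨zmultiplesHom A x, by simpa using hn⟩, ?_⟩
  refine (AddMonoidHom.cancel_right (f := Int.castAddHom (ZMod n)) ZMod.intCast_surjective).1
    (AddMonoidHom.ext_int ?_)
  simp only [AddMonoidHom.comp_apply, ZMod.lift_castAddHom, zmultiplesHom_apply, one_zsmul, hx]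
  simp

theorem exists_comp_eq_id_of_forall_exists_lift [Finite B] (φ : A →+ B)
    (h : ∀ y : B, ∃ x : A, φ x = y ∧ addOrderOf y • x = 0) :
    ∃ σ : B →+ A, φ.comp σ = AddMonoidHom.id B := by
  classical
  obtain ⟨ι, _, n, -, ⟨e⟩⟩ := AddCommGroup.equiv_directSum_zmod_of_finite' B
  have hg (i : ι) : ∃ g : ZMod (n i) →+ A,
      φ.comp g = e.symm.toAddMonoidHom.comp (DirectSum.of (fun i => ZMod (n i)) i) := by
    obtain ⟨x, hx, hxo⟩ := h (e.symm (DirectSum.of _ i 1))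
    rw [AddEquiv.addOrderOf_eq, addOrderOf_injective _ (DirectSum.of_injective i),
      ZMod.addOrderOf_one] at hxo
    exact ZMod.exists_comp_eq_of_lift_one φ _ hx hxo
  choose g hg using hg
  have hφg : φ.comp (DirectSum.toAddMonoid g) = e.symm.toAddMonoidHom :=
    DirectSum.addHom_ext' fun i => by
      rw [← hg i]
      ext
      simp
  refine ⟨(DirectSum.toAddMonoid g).comp e.toAddMonoidHom, ?_⟩
  rw [← AddMonoidHom.comp_assoc, hφg]
  ext
  simp

end

/-- Let `0 → κ → S → S₀ → 0` be a short exact sequence of finite abelian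
`2`-groups (`κ` realised as the kernel of the surjection `φ : S → S₀`).  If the sequence
splits then `|S[2]| = |S₀[2]|·|κ[2]|`; conversely, if `|S[2]| = |S₀[2]|·|κ[2]|` and
moreover `κ` has no element of order `4` or `S₀` has no element of order `4`,
then the sequence splits. -/
theorem split_iff_two_torsion_card
    {S S₀ : Type*} [AddCommGroup S] [AddCommGroup S₀] [Finite S] [Finite S₀]
    (hS : ∀ x : S, ∃ n : ℕ, addOrderOf x = 2 ^ n)
    (hS₀ : ∀ x : S₀, ∃ n : ℕ, addOrderOf x = 2 ^ n)
    (φ : S →+ S₀) (hφ : Function.Surjective φ) :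
    ((∃ σ : S₀ →+ S, φ.comp σ = AddMonoidHom.id S₀) →
      Nat.card {x : S // 2 • x = 0} =
        Nat.card {x : S₀ // 2 • x = 0} * Nat.card {x : φ.ker // 2 • x = 0}) ∧
    ((Nat.card {x : S // 2 • x = 0} =
        Nat.card {x : S₀ // 2 • x = 0} * Nat.card {x : φ.ker // 2 • x = 0}) →
      ((∀ x : φ.ker, addOrderOf x ≠ 4) ∨ (∀ x : S₀, addOrderOf x ≠ 4)) →
      (∃ σ : S₀ →+ S, φ.comp σ = AddMonoidHom.id S₀)) := by
  refine ⟨fun ⟨σ, hσ⟩ => (card_twoTorsion_eq_mul_iff φ).2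
    (surjective_twoTorsionMap_of_comp_eq_id hσ), fun hcard hno4 => ?_⟩
  have hlift := (card_twoTorsion_eq_mul_iff φ).1 hcard
  refine exists_comp_eq_id_of_forall_exists_lift φ fun y => ?_
  rcases hno4 with hκ | hS₀4
  · have hker (z : S) (hz : z ∈ φ.ker) : 2 • z = 0 :=
      congrArg Subtype.val <| two_nsmul_eq_zero_of_addOrderOf_ne_four
        (fun w => by simpa only [AddSubgroup.addOrderOf_coe] using hS w) hκ ⟨z, hz⟩
    obtain ⟨m, hm⟩ := hS₀ y
    exact exists_lift_addOrderOf_nsmul_eq_zero_of_ker hφ hker hlift hm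
  · exact exists_lift_addOrderOf_nsmul_eq_zero_of_two_nsmul_eq_zero hlift
      (two_nsmul_eq_zero_of_addOrderOf_ne_four hS₀ hS₀4 y)
end

section
/- Let ℓ be a prime, K an imaginary quadratic field in which ℓ is ramified, and d ≥ 1. Assume that either ℓ = 2 and D_K ≡ 12 (mod 16), or ℓ = 3 and D_K ≡ 6 (mod 9). Then λ_d, the cokernel of the natural homomorphism (ℤ/ℓ^dℤ)ˣ → (O_K/ℓ^dO_K)ˣ, is isomorphic to ℤ/ℓ^{d−1}ℤ × ℤ/ℓℤ. -/
/-!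
Pick a `ℤ`-basis `1, ω` of `𝓞 K`, with `ω² = s + t ω` and `D_K = t² + 4 s`. For `ℓ = 2` the
condition on `D_K` makes `t` even and `ρ = ω - t / 2` satisfies `ρ² = c` with `c` odd; for
`ℓ = 3`, `ρ = 2 ω - t` satisfies `ρ² = c = D_K ≡ 6 (mod 9)`. In both cases `1, ρ` is a basis of
`R = 𝓞 K / ℓ^d` over `ℤ / ℓ^d`, and `ρ - w` is nilpotent for `w = 1`, resp. `w = 0`, so
`x + y ρ` is a unit iff `ℓ ∤ x + w y`. Counting units shows that the cokernel has order `ℓ^d`.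
The `ℓ`-th power of every unit lies in `ℤ + ℓ² R` (for `ℓ = 3` because `c ≡ 6 (mod 9)`), and
for `m ≥ 2` the `ℓ`-th power map sends `A + ℓ^m B ρ` to `A' + ℓ^(m+1) B' ρ` with
`B' ≡ A^(ℓ-1) B (mod ℓ)`. Hence the cokernel has exponent `ℓ^(d-1)`, attained by the class of
`1 + ℓ ρ`, and a finite abelian group of order `ℓ^d` with these properties is
`ℤ/ℓ^(d-1) × ℤ/ℓ`.
-/

open NumberField

section FiniteAbelian

variable {G : Type*} [CommGroup G] {ℓ e : ℕ}

theorem dvd_of_zpow_mem_zpowers {H : Type*} [Group H] (hℓ : ℓ.Prime) {g h : H} (hh : h ^ ℓ = 1)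
    (hhg : h ∉ Subgroup.zpowers g) {j : ℤ} (hj : h ^ j ∈ Subgroup.zpowers g) : (ℓ : ℤ) ∣ j := by
  by_contra hdvd
  obtain ⟨α, β, hαβ⟩ :=
    ((Nat.prime_iff_prime_int.mp hℓ).coprime_iff_not_dvd.2 hdvd).symm
  refine hhg ?_
  have : h = (h ^ j) ^ α := by
    calc h = h ^ (j * α + ℓ * β) := by rw [mul_comm j, mul_comm (ℓ : ℤ), hαβ, zpow_one]
      _ = (h ^ j) ^ α := by rw [zpow_add, zpow_mul, zpow_mul, zpow_natCast, hh, one_zpow, mul_one]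
  exact this ▸ Subgroup.zpow_mem _ hj α

theorem nonempty_mulEquiv_of_pow_eq_one_of_notMem_zpowers [Finite G] (hℓ : ℓ.Prime)
    (hcard : Nat.card G = ℓ ^ (e + 1)) {g h : G} (hg : orderOf g = ℓ ^ e) (hh : h ^ ℓ = 1)
    (hhg : h ∉ Subgroup.zpowers g) :
    Nonempty (G ≃* Multiplicative (ZMod (ℓ ^ e) × ZMod ℓ)) := by
  have hh' : h ^ (ℓ : ℤ) = 1 := by rw [zpow_natCast, hh]
  let ψ : ZMod (ℓ ^ e) × ZMod ℓ →+ Additive G :=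
    (ZMod.lift _ ⟨zmultiplesHom _ (Additive.ofMul g), by
        simp [← ofMul_pow, ← hg, pow_orderOf_eq_one]⟩).coprod
      (ZMod.lift _ ⟨zmultiplesHom _ (Additive.ofMul h), by simp [← ofMul_pow, hh]⟩)
  have hψ (i j : ℤ) : ψ (i, j) = Additive.ofMul (g ^ i * h ^ j) := by
    simp [ψ, ZMod.lift_coe, ofMul_mul, ofMul_zpow]
  have hinj : Function.Injective ψ := by
    rw [injective_iff_map_eq_zero]
    rintro ⟨a, b⟩ hab
    obtain ⟨i, rfl⟩ := ZMod.intCast_surjective a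
    obtain ⟨j, rfl⟩ := ZMod.intCast_surjective b
    have hgh : g ^ i * h ^ j = 1 := by rwa [hψ, ofMul_eq_zero] at hab
    have hj : (ℓ : ℤ) ∣ j := dvd_of_zpow_mem_zpowers hℓ hh hhg <| by
      rw [eq_inv_of_mul_eq_one_right hgh]
      exact inv_mem (Subgroup.zpow_mem_zpowers g i)
    obtain ⟨k, rfl⟩ := hj
    have hi : g ^ i = 1 := by rwa [zpow_mul, hh', one_zpow, mul_one] at hgh
    rw [Prod.mk_eq_zero, ZMod.intCast_zmod_eq_zero_iff_dvd, ZMod.intCast_zmod_eq_zero_iff_dvd]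
    exact ⟨by exact_mod_cast hg ▸ orderOf_dvd_iff_zpow_eq_one.2 hi, dvd_mul_right _ _⟩
  have hbij : Function.Bijective ψ := by
    rw [Nat.bijective_iff_injective_and_card, Nat.card_prod, Nat.card_zmod, Nat.card_zmod,
      ← pow_succ]
    exact ⟨hinj, hcard.symm⟩
  exact ⟨(AddEquiv.toMultiplicativeLeft (AddEquiv.ofBijective ψ hbij)).symm⟩

theorem exists_pow_eq_one_notMem_zpowers (hℓ : ℓ.Prime) (hcard : Nat.card G = ℓ ^ (e + 1))
    {g : G} (hg : orderOf g = ℓ ^ e) (he : 1 ≤ e) (hexp : ∀ x : G, x ^ ℓ ^ e = 1) :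
    ∃ h : G, h ^ ℓ = 1 ∧ h ∉ Subgroup.zpowers g := by
  set H := Subgroup.zpowers g
  have hindex : H.index = ℓ := by
    have := H.index_mul_card
    rw [Nat.card_zpowers, hg, hcard, pow_succ'] at this
    exact Nat.eq_of_mul_eq_mul_right (pow_pos hℓ.pos e) this
  obtain ⟨x, hx⟩ : ∃ x, x ∉ H := by
    by_contra! hall
    rw [(Subgroup.index_eq_one).2 (eq_top_iff.2 fun x _ => hall x)] at hindex
    exact hℓ.one_lt.ne hindex
  obtain ⟨m, hm⟩ := Subgroup.mem_zpowers_iff.1 (hindex ▸ H.pow_index_mem x)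
  obtain ⟨e, rfl⟩ : ∃ e', e = e' + 1 := ⟨e - 1, by omega⟩
  obtain ⟨k, rfl⟩ : (ℓ : ℤ) ∣ m := by
    have : g ^ (m * (ℓ ^ e : ℕ)) = 1 := by
      rw [zpow_mul, zpow_natCast, hm, ← pow_mul, ← pow_succ', hexp]
    have := orderOf_dvd_iff_zpow_eq_one.2 this
    rw [hg, pow_succ'] at this
    push_cast at this
    exact (mul_dvd_mul_iff_right (pow_ne_zero e (Int.natCast_ne_zero.2 hℓ.ne_zero))).1 this
  refine ⟨x * g ^ (-k), ?_, fun hmem => hx ?_⟩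
  · rw [mul_pow, ← hm, ← zpow_natCast, ← zpow_mul, ← zpow_add, neg_mul, mul_comm,
      add_neg_cancel, zpow_zero]
  · simpa using H.mul_mem hmem (Subgroup.zpow_mem_zpowers g k)

theorem nonempty_mulEquiv_zmod_prod_zmod [Finite G] (hℓ : ℓ.Prime)
    (hcard : Nat.card G = ℓ ^ (e + 1)) {g : G} (hg : orderOf g = ℓ ^ e)
    (hexp : 1 ≤ e → ∀ x : G, x ^ ℓ ^ e = 1) :
    Nonempty (G ≃* Multiplicative (ZMod (ℓ ^ e) × ZMod ℓ)) := by
  obtain ⟨h, hh, hhg⟩ : ∃ h : G, h ^ ℓ = 1 ∧ h ∉ Subgroup.zpowers g := by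
    rcases Nat.eq_zero_or_pos e with rfl | he
    · rw [zero_add, pow_one] at hcard
      have : Nontrivial G := Finite.one_lt_card_iff_nontrivial.1 (hcard ▸ hℓ.one_lt)
      obtain ⟨h, hh⟩ := exists_ne (1 : G)
      rw [pow_zero, orderOf_eq_one_iff] at hg
      exact ⟨h, hcard ▸ pow_card_eq_one', by simpa [hg] using hh⟩
    · exact exists_pow_eq_one_notMem_zpowers hℓ hcard hg he (hexp he)
  exact nonempty_mulEquiv_of_pow_eq_one_of_notMem_zpowers hℓ hcard hg hh hhg

end FiniteAbelian

/-- `1, ρ` is a basis of `R` over `ℤ/n` (over `ℤ` if `n = 0`), in integer coordinates. -/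
structure IsBasisMod {R : Type*} [CommRing R] (n : ℕ) (ρ : R) : Prop where
  exists_eq (r : R) : ∃ x y : ℤ, r = x + y * ρ
  eq_zero_iff (x y : ℤ) : (x : R) + y * ρ = 0 ↔ (n : ℤ) ∣ x ∧ (n : ℤ) ∣ y

namespace IsBasisMod

variable {R : Type*} [CommRing R] {n : ℕ} {ρ : R}

theorem intCast_eq_zero_iff (h : IsBasisMod n ρ) (x : ℤ) : (x : R) = 0 ↔ (n : ℤ) ∣ x := by
  simpa using h.eq_zero_iff x 0

theorem charP (h : IsBasisMod n ρ) : CharP R n :=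
  ⟨fun x => by rw [← Int.cast_natCast, h.intCast_eq_zero_iff]; exact Int.natCast_dvd_natCast⟩

theorem nontrivial (h : IsBasisMod n ρ) (hn : n ≠ 1) : Nontrivial R :=
  ⟨⟨1, 0, fun h1 => hn <| Nat.dvd_one.1 <| by
    exact_mod_cast (h.intCast_eq_zero_iff 1).1 (by simpa using h1)⟩⟩

noncomputable def equivZMod (h : IsBasisMod n ρ) : ZMod n × ZMod n ≃ R :=
  Equiv.ofBijective (fun p => (p.1.cast : R) + p.2.cast * ρ) <| by
    have := h.charP
    refine ⟨?_, fun r => ?_⟩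
    · rintro ⟨a, b⟩ ⟨a', b'⟩ hE
      obtain ⟨x, rfl⟩ := ZMod.intCast_surjective a
      obtain ⟨y, rfl⟩ := ZMod.intCast_surjective b
      obtain ⟨x', rfl⟩ := ZMod.intCast_surjective a'
      obtain ⟨y', rfl⟩ := ZMod.intCast_surjective b'
      simp only [ZMod.cast_intCast'] at hE
      have := (h.eq_zero_iff (x' - x) (y' - y)).1 (by push_cast; linear_combination -hE)
      simpa [ZMod.intCast_eq_intCast_iff_dvd_sub] using this
    · obtain ⟨x, y, rfl⟩ := h.exists_eq r
      exact ⟨(x, y), by simp⟩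

theorem equivZMod_intCast (h : IsBasisMod n ρ) (x y : ℤ) :
    h.equivZMod ((x : ZMod n), (y : ZMod n)) = x + y * ρ := by
  have := h.charP
  change ((x : ZMod n).cast : R) + (y : ZMod n).cast * ρ = _
  rw [ZMod.cast_intCast', ZMod.cast_intCast']

theorem card_units [NeZero n] (h : IsBasisMod n ρ) {w : ℤ}
    (hunit : ∀ x y : ℤ, IsUnit ((x : R) + y * ρ) ↔ IsUnit ((x + w * y : ℤ) : ZMod n)) :
    Nat.card Rˣ = n.totient * n := by
  let shear : ZMod n × ZMod n ≃ ZMod n × ZMod n :=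
    { toFun p := (p.1 + w * p.2, p.2)
      invFun p := (p.1 - w * p.2, p.2)
      left_inv p := by simp
      right_inv p := by simp }
  have hunit' : ∀ p, IsUnit (h.equivZMod p) ↔ IsUnit (shear p).1 := by
    rintro ⟨a, b⟩
    obtain ⟨x, rfl⟩ := ZMod.intCast_surjective a
    obtain ⟨y, rfl⟩ := ZMod.intCast_surjective b
    simpa [h.equivZMod_intCast, shear] using hunit x y
  calc Nat.card Rˣ = Nat.card {r : R // IsUnit r} :=
        Nat.card_congr (Equiv.ofInjective _ Units.val_injective)
    _ = Nat.card {p : ZMod n × ZMod n // IsUnit p.1} :=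
        Nat.card_congr ((h.equivZMod.subtypeEquiv fun p => Iff.rfl).symm.trans
          (shear.subtypeEquiv hunit'))
    _ = Nat.card ((ZMod n)ˣ × ZMod n) :=
        Nat.card_congr ((Equiv.prodSubtypeFstEquivSubtypeProd).trans
          ((Equiv.ofInjective _ Units.val_injective).symm.prodCongr (Equiv.refl _)))
    _ = n.totient * n := by
        rw [Nat.card_prod, Nat.card_eq_fintype_card, ZMod.card_units_eq_totient, Nat.card_zmod]

theorem quotient {A : Type*} [CommRing A] {ω : A} (h : IsBasisMod 0 ω) (n : ℕ)
    {a : ℤ} (ha : IsCoprime a n) (b : ℤ) :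
    IsBasisMod n (Ideal.Quotient.mk (Ideal.span {(n : A)}) (a * ω + b)) := by
  set π := Ideal.Quotient.mk (Ideal.span {(n : A)})
  have hdvd (u v : ℤ) : (n : A) ∣ u + v * ω ↔ (n : ℤ) ∣ u ∧ (n : ℤ) ∣ v := by
    constructor
    · rintro ⟨z, hz⟩
      obtain ⟨x, y, rfl⟩ := h.exists_eq z
      have := (h.eq_zero_iff (u - n * x) (v - n * y)).1 (by push_cast; linear_combination hz)
      simp only [Nat.cast_zero, zero_dvd_iff, sub_eq_zero] at this
      exact ⟨⟨x, this.1⟩, ⟨y, this.2⟩⟩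
    · rintro ⟨⟨x, rfl⟩, ⟨y, rfl⟩⟩
      exact ⟨x + y * ω, by push_cast; ring⟩
  have hmk (u v : ℤ) : (u : A ⧸ Ideal.span {(n : A)}) + v * π (a * ω + b) =
      π (((u + v * b : ℤ) : A) + ((v * a : ℤ) : A) * ω) := by
    simp only [map_add, map_mul, map_intCast]
    push_cast
    ring
  constructor
  · intro r
    obtain ⟨z, rfl⟩ := Ideal.Quotient.mk_surjective r
    obtain ⟨x, y, rfl⟩ := h.exists_eq z
    obtain ⟨α, β, hαβ⟩ := ha
    refine ⟨x - y * α * b, y * α, ?_⟩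
    rw [hmk, Ideal.Quotient.eq, Ideal.mem_span_singleton]
    have hαβ' : (α : A) * a + β * n = 1 := by simpa using congrArg (Int.cast : ℤ → A) hαβ
    exact ⟨y * β * ω, by push_cast; linear_combination (-(y * ω)) * hαβ'⟩
  · intro x y
    rw [hmk, Ideal.Quotient.eq_zero_iff_mem, Ideal.mem_span_singleton, hdvd]
    constructor
    · rintro ⟨hx, hy⟩
      have hy := ha.symm.dvd_of_dvd_mul_right hy
      exact ⟨by simpa using dvd_sub hx (hy.mul_right b), hy⟩
    · rintro ⟨hx, hy⟩
      exact ⟨dvd_add hx (hy.mul_right b), hy.mul_right a⟩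

end IsBasisMod

theorem Module.Basis.isBasisMod_zero {A : Type*} [CommRing A] (C : Module.Basis (Fin 2) ℤ A)
    (hC : C 0 = 1) : IsBasisMod 0 (C 1) where
  exists_eq r := by
    refine ⟨C.repr r 0, C.repr r 1, ?_⟩
    have := C.sum_repr r
    rw [Fin.sum_univ_two, hC] at this
    simpa [zsmul_eq_mul] using this.symm
  eq_zero_iff x y := by
    have hC' : ⇑C = ![1, C 1] := by ext i; fin_cases i <;> simp [hC]
    have hli := C.linearIndependent
    rw [hC', LinearIndependent.pair_iff] at hli
    simp only [Nat.cast_zero, zero_dvd_iff]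
    refine ⟨fun hxy => hli x y (by simpa [zsmul_eq_mul] using hxy), ?_⟩
    rintro ⟨rfl, rfl⟩
    simp

section Units

variable {R : Type*} [CommRing R] {ℓ d : ℕ}

theorem isUnit_intCast_iff_not_dvd [Nontrivial R] (hℓ : ℓ.Prime) (h : ((ℓ ^ d : ℕ) : R) = 0)
    (m : ℤ) : IsUnit (m : R) ↔ ¬ (ℓ : ℤ) ∣ m := by
  push_cast at h
  constructor
  · rintro hu ⟨k, rfl⟩
    refine hu.not_isNilpotent ⟨d, ?_⟩
    push_cast
    rw [mul_pow, h, zero_mul]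
  · intro hm
    obtain ⟨α, β, hαβ⟩ :=
      ((Nat.prime_iff_prime_int.mp hℓ).coprime_iff_not_dvd.2 hm).pow_left (m := d)
    refine IsUnit.of_mul_eq_one (β : R) ?_
    have := congrArg (Int.cast : ℤ → R) hαβ
    push_cast at this
    rwa [h, mul_zero, zero_add, mul_comm] at this

theorem isUnit_add_mul_iff [Nontrivial R] (hℓ : ℓ.Prime) (h : ((ℓ ^ d : ℕ) : R) = 0) {ρ : R}
    {c w : ℤ} (hρ : ρ ^ 2 = c) (hw : (ℓ : ℤ) ∣ c - w ^ 2) (hw2 : (ℓ : ℤ) ∣ 2 * w) (x y : ℤ) :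
    IsUnit ((x : R) + y * ρ) ↔ ¬ (ℓ : ℤ) ∣ x + w * y := by
  obtain ⟨p, hp⟩ := hw
  obtain ⟨q, hq⟩ := hw2
  have hnil : IsNilpotent ((y : R) * (ρ - w)) := by
    have hsq : ((y : R) * (ρ - w)) ^ 2 = ℓ * (y ^ 2 * (p - q * (ρ - w))) := by
      have hp' := congrArg (Int.cast : ℤ → R) hp
      have hq' := congrArg (Int.cast : ℤ → R) hq
      push_cast at hp' hq'
      linear_combination y ^ 2 * hρ + y ^ 2 * hp' - y ^ 2 * (ρ - w) * hq'
    push_cast at h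
    exact ⟨2 * d, by rw [pow_mul, hsq, mul_pow, h, zero_mul]⟩
  have hsplit : (x : R) + y * ρ = ((x + w * y : ℤ) : R) + y * (ρ - w) := by push_cast; ring
  rw [hsplit, ← isUnit_intCast_iff_not_dvd hℓ h]
  exact ⟨fun hu => by simpa using hnil.neg.isUnit_add_left_of_commute hu (Commute.all _ _),
    fun hu => hnil.isUnit_add_left_of_commute hu (Commute.all _ _)⟩

theorem mem_range_unitsMap_iff [Nontrivial R] (hℓ : ℓ.Prime) (f : ZMod (ℓ ^ d) →+* R)
    (u : Rˣ) :
    u ∈ (Units.map f.toMonoidHom).range ↔ ∃ m : ℤ, (u : R) = m := by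
  have hchar : ((ℓ ^ d : ℕ) : R) = 0 := by rw [← map_natCast f, ZMod.natCast_self, map_zero]
  have := f.domain_nontrivial
  constructor
  · rintro ⟨v, rfl⟩
    obtain ⟨m, hm⟩ := ZMod.intCast_surjective (v : ZMod (ℓ ^ d))
    exact ⟨m, by simp [← hm]⟩
  · rintro ⟨m, hm⟩
    have hmu : IsUnit (m : ZMod (ℓ ^ d)) :=
      (isUnit_intCast_iff_not_dvd hℓ (ZMod.natCast_self _) m).2
        ((isUnit_intCast_iff_not_dvd hℓ hchar m).1 (hm ▸ u.isUnit))
    exact ⟨hmu.unit, Units.ext (by simp [hm])⟩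

end Units

section Powers

variable {R : Type*} [CommRing R] {ℓ : ℕ} {ρ : R} {c : ℤ}

theorem exists_add_mul_pow_eq (hρ : ρ ^ 2 = c) (hspan : ∀ r : R, ∃ x y : ℤ, r = x + y * ρ)
    {m : ℕ} (hm : 2 ≤ m) (A B : ℤ) :
    ∃ A' B' : ℤ, ((A : R) + ℓ ^ m * B * ρ) ^ ℓ = A' + ℓ ^ (m + 1) * B' * ρ ∧
      A' ≡ A ^ ℓ [ZMOD ℓ] ∧ B' ≡ A ^ (ℓ - 1) * B [ZMOD ℓ] := by
  obtain ⟨j, rfl⟩ : ∃ j, m = j + 2 := ⟨m - 2, by omega⟩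
  obtain ⟨r, hr⟩ := sq_dvd_add_pow_sub_sub ((ℓ : R) ^ (j + 2) * B * ρ) (A : R) ℓ
  obtain ⟨x, y, rfl⟩ := hspan r
  refine ⟨A ^ ℓ + ℓ ^ (2 * j + 4) * B ^ 2 * c * x,
    A ^ (ℓ - 1) * B + ℓ ^ (j + 1) * B ^ 2 * c * y, ?_,
    Int.modEq_iff_dvd.2 ⟨-(ℓ ^ (2 * j + 3) * B ^ 2 * c * x), by ring⟩,
    Int.modEq_iff_dvd.2 ⟨-(ℓ ^ j * B ^ 2 * c * y), by ring⟩⟩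
  push_cast
  linear_combination hr + (ℓ : R) ^ (2 * j + 4) * B ^ 2 * (x + y * ρ) * hρ

theorem exists_add_mul_pow_prime_pow_eq (hℓ : ℓ.Prime) (hρ : ρ ^ 2 = c)
    (hspan : ∀ r : R, ∃ x y : ℤ, r = x + y * ρ) {m : ℕ} (hm : 2 ≤ m) (A B : ℤ) (k : ℕ) :
    ∃ A' B' : ℤ, ((A : R) + ℓ ^ m * B * ρ) ^ ℓ ^ k = A' + ℓ ^ (m + k) * B' * ρ ∧
      A' ≡ A ^ ℓ ^ k [ZMOD ℓ] ∧ (¬ (ℓ : ℤ) ∣ A → ¬ (ℓ : ℤ) ∣ B → ¬ (ℓ : ℤ) ∣ B') := by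
  have hp := Nat.prime_iff_prime_int.mp hℓ
  induction k with
  | zero => exact ⟨A, B, by simp, by simp, fun _ => id⟩
  | succ k ih =>
    obtain ⟨A', B', hAB, hA', hB'⟩ := ih
    obtain ⟨A'', B'', hAB', hA'', hB''⟩ :=
      exists_add_mul_pow_eq hρ hspan (by omega : 2 ≤ m + k) A' B'
    refine ⟨A'', B'', by rw [pow_succ, pow_mul, hAB, hAB', add_assoc],
      hA''.trans (by rw [pow_succ, pow_mul]; exact hA'.pow ℓ), fun hA hB hdvd => ?_⟩
    have hA'ndvd : ¬ (ℓ : ℤ) ∣ A' := by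
      rw [hA'.dvd_iff]; exact fun h => hA (hp.dvd_of_dvd_pow h)
    rcases hp.dvd_or_dvd (hB''.dvd_iff.1 hdvd) with h | h
    · exact hA'ndvd (hp.dvd_of_dvd_pow h)
    · exact hB' hA hB h

end Powers

section Quotient

variable {R : Type*} [CommRing R] {ℓ d : ℕ} {ρ : R} {c w : ℤ}

theorem IsBasisMod.card_units_quotient_range (hℓ : ℓ.Prime) (hd : 1 ≤ d)
    (h : IsBasisMod (ℓ ^ d) ρ) (hρ : ρ ^ 2 = c) (hw : (ℓ : ℤ) ∣ c - w ^ 2) (hw2 : (ℓ : ℤ) ∣ 2 * w)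
    (f : ZMod (ℓ ^ d) →+* R) :
    Nat.card (Rˣ ⧸ (Units.map f.toMonoidHom).range) = ℓ ^ d := by
  have hℓd : ℓ ^ d ≠ 1 := (Nat.one_lt_pow (by omega) hℓ.one_lt).ne'
  have := h.nontrivial hℓd
  have := h.charP
  have : NeZero (ℓ ^ d) := ⟨pow_ne_zero _ hℓ.ne_zero⟩
  have : Nontrivial (ZMod (ℓ ^ d)) := ZMod.nontrivial_iff.2 hℓd
  have hunits := h.card_units (w := w) fun x y => by
    rw [isUnit_add_mul_iff hℓ (CharP.cast_eq_zero R _) hρ hw hw2,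
      isUnit_intCast_iff_not_dvd hℓ (ZMod.natCast_self _)]
  have hf : Function.Injective f := (injective_iff_map_eq_zero f).2 fun a ha => by
    obtain ⟨x, rfl⟩ := ZMod.intCast_surjective a
    rw [map_intCast, h.intCast_eq_zero_iff] at ha
    exact (ZMod.intCast_zmod_eq_zero_iff_dvd _ _).2 ha
  have hrange : Nat.card (Units.map f.toMonoidHom).range = (ℓ ^ d).totient := by
    rw [← Nat.card_congr (MonoidHom.ofInjective (Units.map_injective (f := f.toMonoidHom) hf)
      ).toEquiv, Nat.card_eq_fintype_card, ZMod.card_units_eq_totient]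
  have := Subgroup.card_eq_card_quotient_mul_card_subgroup (Units.map f.toMonoidHom).range
  rw [hunits, hrange, mul_comm] at this
  exact (Nat.eq_of_mul_eq_mul_right (Nat.totient_pos.2 (pow_pos hℓ.pos d)) this).symm

theorem IsBasisMod.pow_mem_range_unitsMap (hℓ : ℓ.Prime) (hd : 2 ≤ d)
    (h : IsBasisMod (ℓ ^ d) ρ) (hρ : ρ ^ 2 = c) (hw : (ℓ : ℤ) ∣ c - w ^ 2) (hw2 : (ℓ : ℤ) ∣ 2 * w)
    (hpow : ∀ x y : ℤ, ¬ (ℓ : ℤ) ∣ x + w * y →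
      ∃ A B : ℤ, ((x : R) + y * ρ) ^ ℓ = A + ℓ ^ 2 * B * ρ)
    (f : ZMod (ℓ ^ d) →+* R) (u : Rˣ) : u ^ ℓ ^ (d - 1) ∈ (Units.map f.toMonoidHom).range := by
  have := h.nontrivial (Nat.one_lt_pow (by omega) hℓ.one_lt).ne'
  have := h.charP
  have hchar : (ℓ : R) ^ d = 0 := by exact_mod_cast CharP.cast_eq_zero R (ℓ ^ d)
  obtain ⟨x, y, hxy⟩ := h.exists_eq u
  obtain ⟨A, B, hAB⟩ :=
    hpow x y ((isUnit_add_mul_iff hℓ (CharP.cast_eq_zero R _) hρ hw hw2 x y).1 (hxy ▸ u.isUnit))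
  obtain ⟨A', B', hAB', -⟩ :=
    exists_add_mul_pow_prime_pow_eq hℓ hρ h.exists_eq le_rfl A B (d - 2)
  refine (mem_range_unitsMap_iff hℓ f _).2 ⟨A', ?_⟩
  rw [Units.val_pow_eq_pow_val, hxy, show ℓ ^ (d - 1) = ℓ * ℓ ^ (d - 2) by
    rw [← pow_succ']; congr 1; omega, pow_mul, hAB, hAB', show 2 + (d - 2) = d by omega, hchar]
  ring

theorem exists_one_add_mul_pow_prime_pow_eq (hℓ : ℓ.Prime) (hρ : ρ ^ 2 = c)
    (hspan : ∀ r : R, ∃ x y : ℤ, r = x + y * ρ)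
    (hgen : ∃ A B : ℤ, ¬ (ℓ : ℤ) ∣ A ∧ ¬ (ℓ : ℤ) ∣ B ∧
      (1 + ℓ * ρ) ^ ℓ = A + ℓ ^ 2 * B * ρ)
    (k : ℕ) : ∃ A B : ℤ, (1 + ℓ * ρ) ^ ℓ ^ k = A + ℓ ^ (k + 1) * B * ρ ∧ ¬ (ℓ : ℤ) ∣ B := by
  cases k with
  | zero => exact ⟨1, 1, by simp, (Nat.prime_iff_prime_int.mp hℓ).not_dvd_one⟩
  | succ k =>
    obtain ⟨A, B, hA, hB, hAB⟩ := hgen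
    obtain ⟨A', B', hAB', -, hB'⟩ := exists_add_mul_pow_prime_pow_eq hℓ hρ hspan le_rfl A B k
    exact ⟨A', B', by rw [pow_succ', pow_mul, hAB, hAB', add_comm 2 k], hB' hA hB⟩

theorem IsBasisMod.exists_orderOf_eq (hℓ : ℓ.Prime) (hd : 1 ≤ d)
    (h : IsBasisMod (ℓ ^ d) ρ) (hρ : ρ ^ 2 = c) (hw : (ℓ : ℤ) ∣ c - w ^ 2) (hw2 : (ℓ : ℤ) ∣ 2 * w)
    (hpow : ∀ x y : ℤ, ¬ (ℓ : ℤ) ∣ x + w * y →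
      ∃ A B : ℤ, ((x : R) + y * ρ) ^ ℓ = A + ℓ ^ 2 * B * ρ)
    (hgen : ∃ A B : ℤ, ¬ (ℓ : ℤ) ∣ A ∧ ¬ (ℓ : ℤ) ∣ B ∧
      (1 + ℓ * ρ) ^ ℓ = A + ℓ ^ 2 * B * ρ)
    (f : ZMod (ℓ ^ d) →+* R) :
    ∃ g : Rˣ ⧸ (Units.map f.toMonoidHom).range, orderOf g = ℓ ^ (d - 1) := by
  obtain rfl | ⟨k, rfl⟩ : d = 1 ∨ ∃ k, d = k + 2 := by
    rcases Nat.lt_or_ge d 2 with hd2 | hd2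
    exacts [Or.inl (by omega), Or.inr ⟨d - 2, by omega⟩]
  · exact ⟨1, orderOf_one⟩
  have := h.nontrivial (Nat.one_lt_pow (by omega) hℓ.one_lt).ne'
  have := h.charP
  have : Fact ℓ.Prime := ⟨hℓ⟩
  have hℓ0 : (ℓ : R) ^ (k + 2) = 0 := by exact_mod_cast CharP.cast_eq_zero R (ℓ ^ (k + 2))
  have hu : IsUnit (1 + (ℓ : R) * ρ) :=
    IsNilpotent.isUnit_one_add ⟨k + 2, by rw [mul_pow, hℓ0, zero_mul]⟩
  refine ⟨hu.unit, orderOf_eq_prime_pow (fun hg => ?_) ?_⟩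
  · obtain ⟨m, hm⟩ := (mem_range_unitsMap_iff hℓ f _).1
      ((QuotientGroup.eq_one_iff _).1 (by rw [QuotientGroup.mk_pow]; exact hg))
    obtain ⟨A, B, hAB, hB⟩ := exists_one_add_mul_pow_prime_pow_eq hℓ hρ h.exists_eq hgen k
    rw [Units.val_pow_eq_pow_val, IsUnit.unit_spec, hAB] at hm
    have hdvd :=
      ((h.eq_zero_iff (A - m) (ℓ ^ (k + 1) * B)).1 (by push_cast; linear_combination hm)).2
    push_cast at hdvd
    rw [pow_succ] at hdvd
    exact hB ((mul_dvd_mul_iff_left (pow_ne_zero _ (Int.natCast_ne_zero.2 hℓ.ne_zero))).1 hdvd)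
  · rw [← QuotientGroup.mk_pow, QuotientGroup.eq_one_iff]
    exact h.pow_mem_range_unitsMap hℓ (by omega) hρ hw hw2 hpow f _

theorem IsBasisMod.nonempty_mulEquiv (hℓ : ℓ.Prime) (hd : 1 ≤ d)
    (h : IsBasisMod (ℓ ^ d) ρ) (hρ : ρ ^ 2 = c) (hw : (ℓ : ℤ) ∣ c - w ^ 2) (hw2 : (ℓ : ℤ) ∣ 2 * w)
    (hpow : ∀ x y : ℤ, ¬ (ℓ : ℤ) ∣ x + w * y →
      ∃ A B : ℤ, ((x : R) + y * ρ) ^ ℓ = A + ℓ ^ 2 * B * ρ)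
    (hgen : ∃ A B : ℤ, ¬ (ℓ : ℤ) ∣ A ∧ ¬ (ℓ : ℤ) ∣ B ∧
      (1 + ℓ * ρ) ^ ℓ = A + ℓ ^ 2 * B * ρ)
    (f : ZMod (ℓ ^ d) →+* R) :
    Nonempty ((Rˣ ⧸ (Units.map f.toMonoidHom).range) ≃*
      Multiplicative (ZMod (ℓ ^ (d - 1)) × ZMod ℓ)) := by
  have hcard := h.card_units_quotient_range hℓ hd hρ hw hw2 f
  have : Finite (Rˣ ⧸ (Units.map f.toMonoidHom).range) :=
    Nat.finite_of_card_ne_zero (by rw [hcard]; exact pow_ne_zero _ hℓ.ne_zero)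
  obtain ⟨g, hg⟩ := h.exists_orderOf_eq hℓ hd hρ hw hw2 hpow hgen f
  have hcard' : Nat.card (Rˣ ⧸ (Units.map f.toMonoidHom).range) = ℓ ^ (d - 1 + 1) := by
    rwa [Nat.sub_add_cancel hd]
  refine nonempty_mulEquiv_zmod_prod_zmod (e := d - 1) hℓ hcard' hg fun hd' x => ?_
  obtain ⟨u, rfl⟩ := QuotientGroup.mk_surjective x
  rw [← QuotientGroup.mk_pow, QuotientGroup.eq_one_iff]
  exact h.pow_mem_range_unitsMap hℓ (by omega) hρ hw hw2 hpow f u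

theorem IsBasisMod.nonempty_mulEquiv_of_two (hd : 1 ≤ d) (h : IsBasisMod (2 ^ d) ρ)
    (hρ : ρ ^ 2 = c) (hc : Odd c) (f : ZMod (2 ^ d) →+* R) :
    Nonempty ((Rˣ ⧸ (Units.map f.toMonoidHom).range) ≃*
      Multiplicative (ZMod (2 ^ (d - 1)) × ZMod 2)) := by
  obtain ⟨k, rfl⟩ := hc
  refine h.nonempty_mulEquiv Nat.prime_two hd hρ (w := 1) ⟨k, by ring⟩ ⟨1, by ring⟩
    (fun x y hxy => ?_) ⟨1 + 4 * (2 * k + 1), 1, by omega, by omega, ?_⟩ f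
  · obtain ⟨m, hm⟩ : Even (x * y) := by
      have : ¬ Even (x + y) := by simpa [even_iff_two_dvd] using hxy
      rw [Int.even_add] at this
      exact Int.even_mul.2 (by tauto)
    refine ⟨x ^ 2 + (2 * k + 1) * y ^ 2, m, ?_⟩
    have hm' : (x : R) * y = m + m := by simpa using congrArg (Int.cast : ℤ → R) hm
    push_cast at hρ ⊢
    linear_combination y ^ 2 * hρ + 2 * ρ * hm'
  · push_cast at hρ ⊢
    linear_combination 4 * hρ

theorem IsBasisMod.nonempty_mulEquiv_of_three (hd : 1 ≤ d) (h : IsBasisMod (3 ^ d) ρ)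
    (hρ : ρ ^ 2 = c) (hc : c % 9 = 6) (f : ZMod (3 ^ d) →+* R) :
    Nonempty ((Rˣ ⧸ (Units.map f.toMonoidHom).range) ≃*
      Multiplicative (ZMod (3 ^ (d - 1)) × ZMod 3)) := by
  obtain ⟨q, rfl⟩ : ∃ q, c = 9 * q + 6 := ⟨c / 9, by omega⟩
  refine h.nonempty_mulEquiv Nat.prime_three hd hρ (w := 0) ⟨3 * q + 2, by ring⟩
    ⟨0, by ring⟩ (fun x y hxy => ?_)
    ⟨1 + 27 * (9 * q + 6), 1 + 3 * (9 * q + 6), by omega, by omega, ?_⟩ f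
  · -- `9 ∣ 3 x² y + c y³` because `x² + 2 y² ≡ 0 (mod 3)` whenever `3 ∤ x` and `3 ∤ y`
    obtain ⟨t, ht⟩ : (3 : ℤ) ∣ y * (x ^ 2 + 2 * y ^ 2) := by
      have hx : (x : ZMod 3) ≠ 0 := by
        rwa [Ne, ZMod.intCast_zmod_eq_zero_iff_dvd, Nat.cast_ofNat, ← add_zero x, ← zero_mul y]
      have := (ZMod.intCast_zmod_eq_zero_iff_dvd (y * (x ^ 2 + 2 * y ^ 2)) 3).1 <| by
        push_cast
        generalize (x : ZMod 3) = a at hx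
        generalize (y : ZMod 3) = b
        revert a b
        decide
      exact_mod_cast this
    refine ⟨x ^ 3 + 3 * (9 * q + 6) * x * y ^ 2, q * y ^ 3 + t, ?_⟩
    have ht' : (y : R) * (x ^ 2 + 2 * y ^ 2) = 3 * t := by
      simpa using congrArg (Int.cast : ℤ → R) ht
    push_cast at hρ ⊢
    linear_combination (3 * x * y ^ 2 + y ^ 3 * ρ) * hρ + 3 * ρ * ht'
  · push_cast at hρ ⊢
    linear_combination (27 + 27 * ρ) * hρ

end Quotient

theorem Module.Basis.exists_basis_zero_eq {R M : Type*} [CommRing R] [AddCommGroup M] [Module R M]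
    (b : Module.Basis (Fin 2) R M) {v : M} (hv : IsCoprime (b.repr v 0) (b.repr v 1)) :
    ∃ C : Module.Basis (Fin 2) R M, C 0 = v := by
  obtain ⟨p, q, hpq⟩ := hv
  let e := LinearEquiv.ofIsUnitDet (v := b) (v' := b)
    (f := Matrix.toLin b b !![b.repr v 0, -q; b.repr v 1, p]) (by
      rw [LinearMap.toMatrix_toLin, Matrix.det_fin_two_of]
      convert isUnit_one
      linear_combination hpq)
  refine ⟨b.map e, ?_⟩
  have := b.sum_repr v
  rw [Fin.sum_univ_two] at this
  simpa [e, Matrix.toLin_self, Fin.sum_univ_two] using this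

theorem NumberField.isCoprime_repr_one {K : Type*} [Field K] [NumberField K]
    (b : Module.Basis (Fin 2) ℤ (𝓞 K)) : IsCoprime (b.repr 1 0) (b.repr 1 1) := by
  refine IsRelPrime.isCoprime fun g hg0 hg1 => ?_
  have hunit : IsUnit (algebraMap ℤ (𝓞 K) g) := by
    refine isUnit_of_dvd_one ?_
    rw [← b.sum_repr 1, Fin.sum_univ_two]
    exact dvd_add (by simpa [zsmul_eq_mul] using (map_dvd (algebraMap ℤ (𝓞 K)) hg0).mul_right (b 0))
      (by simpa [zsmul_eq_mul] using (map_dvd (algebraMap ℤ (𝓞 K)) hg1).mul_right (b 1))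
  have := hunit.map (Algebra.norm ℤ)
  rw [Algebra.norm_algebraMap_of_basis b, Fintype.card_fin] at this
  exact isUnit_pow_iff two_ne_zero |>.1 this

theorem Algebra.discr_eq_sq_add_four_mul {R S : Type*} [CommRing R] [CommRing S] [Algebra R S]
    (C : Module.Basis (Fin 2) R S) (hC : C 0 = 1) {s t : R}
    (hsq : C 1 ^ 2 = algebraMap R S s + algebraMap R S t * C 1) :
    Algebra.discr R C = t ^ 2 + 4 * s := by
  have hrepr (a b : R) (i : Fin 2) :
      C.repr (algebraMap R S a + algebraMap R S b * C 1) i = ![a, b] i := by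
    rw [← mul_one (algebraMap R S a), ← hC, ← Algebra.smul_def, ← Algebra.smul_def]
    fin_cases i <;> simp
  have htr (a b : R) :
      Algebra.trace R S (algebraMap R S a + algebraMap R S b * C 1) = 2 * a + t * b := by
    rw [Algebra.trace_eq_matrix_trace C, Matrix.trace_fin_two, Algebra.leftMulMatrix_eq_repr_mul,
      Algebra.leftMulMatrix_eq_repr_mul, hC, mul_one, hrepr,
      show (algebraMap R S a + algebraMap R S b * C 1) * C 1
        = algebraMap R S (b * s) + algebraMap R S (a + b * t) * C 1 by
          rw [map_mul, map_add, map_mul]; linear_combination (algebraMap R S b) * hsq, hrepr]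
    simp only [Matrix.cons_val_zero, Matrix.cons_val_one]
    ring
  have htr1 : Algebra.trace R S 1 = 2 := by simpa using htr 1 0
  have htrω : Algebra.trace R S (C 1) = t := by simpa using htr 0 1
  have htrω2 : Algebra.trace R S (C 1 ^ 2) = 2 * s + t ^ 2 := by rw [hsq, htr]; ring
  rw [Algebra.discr_def, Matrix.det_fin_two]
  simp only [Algebra.traceMatrix_apply, Algebra.traceForm_apply, hC, one_mul, mul_one]
  rw [← sq, htr1, htrω, htrω2]
  ring

theorem NumberField.exists_isBasisMod_zero_sq_eq {K : Type*} [Field K] [NumberField K]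
    (hdeg : Module.finrank ℚ K = 2) :
    ∃ ω : 𝓞 K, ∃ s t : ℤ, IsBasisMod 0 ω ∧ ω ^ 2 = s + t * ω ∧ discr K = t ^ 2 + 4 * s := by
  let b := Module.finBasisOfFinrankEq ℤ (𝓞 K) (by rw [RingOfIntegers.rank, hdeg])
  obtain ⟨C, hC⟩ := b.exists_basis_zero_eq (isCoprime_repr_one b)
  have hω := C.isBasisMod_zero hC
  obtain ⟨s, t, hst⟩ := hω.exists_eq (C 1 ^ 2)
  refine ⟨C 1, s, t, hω, hst, ?_⟩
  rw [← discr_eq_discr K C, Algebra.discr_eq_sq_add_four_mul C hC (by simpa using hst)]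

theorem NumberField.exists_isBasisMod_quotient {K : Type*} [Field K] [NumberField K]
    (hdeg : Module.finrank ℚ K = 2) {ℓ : ℕ}
    (hcase : (ℓ = 2 ∧ discr K % 16 = 12) ∨ (ℓ = 3 ∧ discr K % 9 = 6)) (d : ℕ) :
    ∃ ρ : 𝓞 K ⧸ Ideal.span {(ℓ : 𝓞 K) ^ d}, ∃ c : ℤ,
      IsBasisMod (ℓ ^ d) ρ ∧ ρ ^ 2 = c ∧ ((ℓ = 2 ∧ Odd c) ∨ (ℓ = 3 ∧ c % 9 = 6)) := by
  obtain ⟨ω, s, t, hω, hsq, hD⟩ := exists_isBasisMod_zero_sq_eq hdeg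
  have hbasis (a b : ℤ) (ha : IsCoprime a (ℓ ^ d : ℕ)) :
      IsBasisMod (ℓ ^ d) (Ideal.Quotient.mk (Ideal.span {(ℓ : 𝓞 K) ^ d}) (a * ω + b)) := by
    have := hω.quotient (ℓ ^ d) ha b
    rw [Nat.cast_pow] at this
    exact this
  have hsq' (a b c : ℤ) (habc : ((a : 𝓞 K) * ω + b) ^ 2 = c) :
      Ideal.Quotient.mk (Ideal.span {(ℓ : 𝓞 K) ^ d}) (a * ω + b) ^ 2 = c := by
    rw [← map_pow, habc, map_intCast]
  rcases hcase with ⟨rfl, hD16⟩ | ⟨rfl, hD9⟩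
  · obtain ⟨t₀, rfl⟩ : Even t := by
      refine (Int.even_pow' two_ne_zero).1 ?_
      rw [hD] at hD16
      generalize t ^ 2 = T at hD16
      exact ⟨T / 2, by omega⟩
    refine ⟨_, s + t₀ ^ 2, hbasis 1 (-t₀) isCoprime_one_left,
      hsq' _ _ _ (by push_cast at hsq ⊢; linear_combination hsq), Or.inl ⟨rfl, ?_⟩⟩
    rw [show discr K = 4 * (s + t₀ ^ 2) by rw [hD]; ring] at hD16
    generalize s + t₀ ^ 2 = c at hD16
    exact Int.odd_iff.2 (by omega)
  · refine ⟨_, t ^ 2 + 4 * s, hbasis 2 (-t) ?_,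
      hsq' _ _ _ (by push_cast; linear_combination 4 * hsq), Or.inr ⟨rfl, hD ▸ hD9⟩⟩
    push_cast
    exact IsCoprime.pow_right ⟨-1, 1, by norm_num⟩

theorem lambda_d_of_ramified_special_general
    {K : Type*} [Field K] [NumberField K]
    (hdeg : Module.finrank ℚ K = 2)
    (ℓ : ℕ)
    (hcase : (ℓ = 2 ∧ NumberField.discr K % 16 = 12) ∨
             (ℓ = 3 ∧ NumberField.discr K % 9 = 6))
    (d : ℕ) (hd : 1 ≤ d)
    (f : ZMod (ℓ ^ d) →+* (𝓞 K ⧸ Ideal.span {(ℓ : 𝓞 K) ^ d})) :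
    Nonempty
      (((𝓞 K ⧸ Ideal.span {(ℓ : 𝓞 K) ^ d})ˣ ⧸ (Units.map f.toMonoidHom).range) ≃*
        Multiplicative (ZMod (ℓ ^ (d - 1)) × ZMod ℓ)) := by
  obtain ⟨ρ, c, h, hρ, hc⟩ := NumberField.exists_isBasisMod_quotient hdeg hcase d
  rcases hc with ⟨rfl, hc⟩ | ⟨rfl, hc⟩
  · exact h.nonempty_mulEquiv_of_two hd hρ hc f
  · exact h.nonempty_mulEquiv_of_three hd hρ hc f

/-- Let `ℓ` be a prime, `K` an imaginary quadratic field in which `ℓ` is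
ramified, and `d ≥ 1`.  Assume `ℓ = 2` and `D_K ≡ 12 (mod 16)`, or `ℓ = 3` and
`D_K ≡ 6 (mod 9)`.  Then `λ_d`, the cokernel of the natural map
`(ℤ/ℓ^dℤ)ˣ → (O_K/ℓ^dO_K)ˣ`, is isomorphic to `ℤ/ℓ^{d−1}ℤ × ℤ/ℓℤ`. -/
theorem lambda_d_of_ramified_special
    {K : Type*} [Field K] [NumberField K]
    (hdeg : Module.finrank ℚ K = 2) (hneg : NumberField.discr K < 0)
    (ℓ : ℕ) (hℓ : ℓ.Prime)
    (hram : ∃ P : Ideal (𝓞 K), P.IsPrime ∧ Ideal.span {(ℓ : 𝓞 K)} = P ^ 2)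
    (hcase : (ℓ = 2 ∧ NumberField.discr K % 16 = 12) ∨
             (ℓ = 3 ∧ NumberField.discr K % 9 = 6))
    (d : ℕ) (hd : 1 ≤ d)
    (f : ZMod (ℓ ^ d) →+* (𝓞 K ⧸ Ideal.span {(ℓ : 𝓞 K) ^ d})) :
    Nonempty
      (((𝓞 K ⧸ Ideal.span {(ℓ : 𝓞 K) ^ d})ˣ ⧸ (Units.map f.toMonoidHom).range) ≃*
        Multiplicative (ZMod (ℓ ^ (d - 1)) × ZMod ℓ)) :=
  lambda_d_of_ramified_special_general hdeg ℓ hcase d hd f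
end

section
/- Let K be an imaginary quadratic field, let O be an order in K of conductor m (i.e., of additive index m in O_K), and let n be a positive integer with gcd(m, n) = 1. Then the inclusion O ↪ O_K induces a ring isomorphism O/nO ≅ O_K/nO_K. -/
open NumberField

/-!
If `m` is the index of a subring `O ⊆ R` then `m R ⊆ O`. When `m` is coprime to `n`, writing
`1 = a m + b n` gives `y = a (m y) + n (b y)` for every `y ∈ R`: so every class of `R / nR` meets
`O`, and `n z ∈ O` forces `z ∈ O`, i.e. `O ∩ nR = nO`. Hence `O → R / nR` is surjective with
kernel `nO`.
-/

namespace Subring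

variable {R : Type*} [CommRing R] (O : Subring R)

theorem natCast_index_mul_mem (y : R) : (O.toAddSubgroup.index : R) * y ∈ O := by
  simpa [nsmul_eq_mul] using O.toAddSubgroup.nsmul_index_mem y

variable {O} {n : ℕ}

theorem mem_of_mul_natCast_mem (hcop : Nat.Coprime O.toAddSubgroup.index n) {z : R}
    (hz : z * n ∈ O) : z ∈ O := by
  obtain ⟨a, b, hab⟩ := Nat.isCoprime_iff_coprime.mpr hcop
  have hz_eq : z = a * (O.toAddSubgroup.index * z) + b * (z * n) := by
    calc z = ((a * O.toAddSubgroup.index + b * n : ℤ) : R) * z := by simp [hab]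
      _ = _ := by push_cast; ring
  rw [hz_eq]
  exact add_mem (mul_mem (intCast_mem O a) (natCast_index_mul_mem O z))
    (mul_mem (intCast_mem O b) hz)

theorem exists_mem_sub_mem_span_natCast (hcop : Nat.Coprime O.toAddSubgroup.index n) (y : R) :
    ∃ x ∈ O, x - y ∈ Ideal.span {(n : R)} := by
  obtain ⟨a, b, hab⟩ := Nat.isCoprime_iff_coprime.mpr hcop
  refine ⟨a * (O.toAddSubgroup.index * y), mul_mem (intCast_mem O a) (natCast_index_mul_mem O y),
    Ideal.mem_span_singleton'.mpr ⟨-(b * y), ?_⟩⟩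
  calc -(b * y) * n = a * (O.toAddSubgroup.index * y)
        - ((a * O.toAddSubgroup.index + b * n : ℤ) : R) * y := by push_cast; ring
    _ = _ := by simp [hab]

theorem ker_mk_comp_subtype_span_natCast (hcop : Nat.Coprime O.toAddSubgroup.index n) :
    RingHom.ker ((Ideal.Quotient.mk (Ideal.span {(n : R)})).comp O.subtype) =
      Ideal.span {(n : O)} := by
  ext x
  rw [RingHom.mem_ker, RingHom.comp_apply, Ideal.Quotient.eq_zero_iff_mem,
    Ideal.mem_span_singleton', Ideal.mem_span_singleton']
  constructor
  · rintro ⟨z, hz⟩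
    exact ⟨⟨z, mem_of_mul_natCast_mem hcop (hz ▸ x.2)⟩, Subtype.ext hz⟩
  · rintro ⟨z, rfl⟩
    exact ⟨z, by simp⟩

theorem mk_comp_subtype_span_natCast_surjective
    (hcop : Nat.Coprime O.toAddSubgroup.index n) :
    Function.Surjective ((Ideal.Quotient.mk (Ideal.span {(n : R)})).comp O.subtype) := by
  intro q
  obtain ⟨y, rfl⟩ := Ideal.Quotient.mk_surjective q
  obtain ⟨x, hxO, hx⟩ := exists_mem_sub_mem_span_natCast hcop y
  exact ⟨⟨x, hxO⟩, (Ideal.Quotient.mk_eq_mk_iff_sub_mem _ _).mpr hx⟩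

end Subring

theorem order_quot_iso_ring_of_integers_quot_general
    {K : Type*} [Field K] [NumberField K]
    (O : Subring (𝓞 K)) (m : ℕ) (hm : O.toAddSubgroup.index = m)
    (n : ℕ) (hcop : Nat.Coprime m n) :
    ∃ φ : (↥O ⧸ Ideal.span {(n : ↥O)}) ≃+* (𝓞 K ⧸ Ideal.span {(n : 𝓞 K)}),
      ∀ x : ↥O, φ (Ideal.Quotient.mk (Ideal.span {(n : ↥O)}) x) =
        Ideal.Quotient.mk (Ideal.span {(n : 𝓞 K)}) (x : 𝓞 K) := by
  subst hm
  exact ⟨(Ideal.quotEquivOfEq (O.ker_mk_comp_subtype_span_natCast hcop).symm).trans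
      (RingHom.quotientKerEquivOfSurjective (O.mk_comp_subtype_span_natCast_surjective hcop)),
    fun _ => rfl⟩

/-- Let `K` be an imaginary quadratic field, `O` an order in `K` of
conductor `m` (additive index `m` in `O_K`), and `n` a positive integer with
`gcd(m, n) = 1`.  Then the inclusion `O ↪ O_K` induces a ring isomorphism
`O/nO ≅ O_K/nO_K`. -/
theorem order_quot_iso_ring_of_integers_quot
    {K : Type*} [Field K] [NumberField K]
    (hdeg : Module.finrank ℚ K = 2) (hneg : NumberField.discr K < 0)
    (O : Subring (𝓞 K)) (m : ℕ) (hm : O.toAddSubgroup.index = m) (hm0 : 0 < m)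
    (n : ℕ) (hn : 0 < n) (hcop : Nat.Coprime m n) :
    ∃ φ : (↥O ⧸ Ideal.span {(n : ↥O)}) ≃+* (𝓞 K ⧸ Ideal.span {(n : 𝓞 K)}),
      ∀ x : ↥O, φ (Ideal.Quotient.mk (Ideal.span {(n : ↥O)}) x) =
        Ideal.Quotient.mk (Ideal.span {(n : 𝓞 K)}) (x : 𝓞 K) :=
  order_quot_iso_ring_of_integers_quot_general O m hm n hcop
end

section
/- Let ℓ be a prime and K an imaginary quadratic field. For d ≥ 0 let λ_d be the cokernel of the natural homomorphism (ℤ/ℓ^dℤ)ˣ → (O_K/ℓ^dO_K)ˣ, let κ_d be the Sylow ℓ-subgroup of λ_d, and let π′_d : κ_{d+1} → κ_d be the (surjective) homomorphism induced by the reduction map (O_K/ℓ^{d+1}O_K)ˣ → (O_K/ℓ^dO_K)ˣ. Then ker π′_0 is cyclic of order ℓ if ℓ is ramified in O_K and trivial otherwise; and for every d ≥ 1, ker π′_d is cyclic of order ℓ. -/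
/-!
Reduction `𝓞_K/ℓ^{m+1} → 𝓞_K/ℓ^m` is surjective with nilpotent kernel (for `m ≥ 1`), so it is
onto on units and `|(𝓞_K/ℓ^{m+1})ˣ| = ℓ² |(𝓞_K/ℓ^m)ˣ|`, while `|(ℤ/ℓ^{m+1})ˣ| = ℓ |(ℤ/ℓ^m)ˣ|`.
Hence `|λ_{m+1}| = ℓ |λ_m|`. A surjection of finite abelian groups maps the Sylow `ℓ`-subgroup
onto the Sylow `ℓ`-subgroup, so `π′_d` is onto and `|ker π′_d| = |κ_{d+1}| / |κ_d| = ℓ` for `d ≥ 1`.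

For `d = 0` the target `κ_0` is trivial and `|λ_1| (ℓ - 1) = |(𝓞_K/ℓ)ˣ|`. If `ℓ 𝓞_K = P²`, counting
through `𝓞_K/P² → 𝓞_K/P ≅ 𝔽_ℓ` gives `|(𝓞_K/ℓ)ˣ| = (ℓ - 1) ℓ`. Otherwise `ℓ 𝓞_K` (of norm `ℓ²`) is
squarefree, so `𝓞_K/ℓ` is reduced of characteristic `ℓ`; as Frobenius is injective there, it has no
unit of order `ℓ`.
-/

open NumberField

section NilpotentKernel

variable {R S : Type*} [CommRing R] [CommRing S] (f : R →+* S)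

theorem isLocalHom_of_surjective_of_isNilpotent (hf : Function.Surjective f)
    (hker : ∀ x, f x = 0 → IsNilpotent x) : IsLocalHom f where
  map_nonunit a ha := by
    obtain ⟨b, hb⟩ := hf ↑ha.unit⁻¹
    have hab : IsUnit (1 + (a * b - 1)) := IsNilpotent.isUnit_one_add <|
      hker _ (by rw [map_sub, map_mul, hb, map_one, ha.mul_val_inv, sub_self])
    rw [add_sub_cancel] at hab
    exact isUnit_of_mul_isUnit_left hab

theorem units_map_surjective_of_isNilpotent (hf : Function.Surjective f)
    (hker : ∀ x, f x = 0 → IsNilpotent x) : Function.Surjective (Units.map f.toMonoidHom) :=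
  IsLocalRing.surjective_units_map_of_local_ringHom f hf
    (isLocalHom_of_surjective_of_isNilpotent f hf hker)

theorem MonoidHom.card_eq_card_ker_mul_of_surjective {G H : Type*} [Group G] [Group H]
    (φ : G →* H) (hφ : Function.Surjective φ) : Nat.card G = Nat.card φ.ker * Nat.card H := by
  rw [← φ.ker.card_mul_index, Subgroup.index_ker, φ.range_eq_top.mpr hφ, Subgroup.card_top]

/-- The kernel of `Rˣ → Sˣ` is `1 + ker f`, which has the size of `ker f`. -/
theorem card_units_mul_card_eq_of_isNilpotent (hf : Function.Surjective f)
    (hker : ∀ x, f x = 0 → IsNilpotent x) :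
    Nat.card Rˣ * Nat.card S = Nat.card Sˣ * Nat.card R := by
  set φ := Units.map f.toMonoidHom
  have hunits := φ.card_eq_card_ker_mul_of_surjective
    (units_map_surjective_of_isNilpotent f hf hker)
  have hring : Nat.card R = Nat.card f.toAddMonoidHom.ker * Nat.card S := by
    rw [← f.toAddMonoidHom.ker.card_mul_index, AddSubgroup.index_ker,
      AddMonoidHom.range_eq_top.mpr hf, AddSubgroup.card_top]
  have hbij : Function.Bijective fun u : φ.ker ↦
      (⟨(u : Rˣ) - 1, by simp [show f (u : Rˣ) = 1 from congr_arg Units.val u.2]⟩ :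
        f.toAddMonoidHom.ker) := by
    refine ⟨fun u v huv ↦ Subtype.ext <| Units.ext <|
      sub_left_injective (congr_arg Subtype.val huv), fun x ↦ ?_⟩
    have hx : f x = 0 := x.2
    have hunit := (hker x hx).isUnit_one_add
    refine ⟨⟨hunit.unit, Units.ext ?_⟩, Subtype.ext (add_sub_cancel_left 1 (x : R))⟩
    simp [φ, hx]
  rw [hunits, hring, Nat.card_eq_of_bijective _ hbij]
  ring

end NilpotentKernel

theorem ZMod.units_map_range_le_comap {R S : Type*} [CommRing R] [CommRing S] {m n : ℕ}
    (hnm : n ∣ m) (f : ZMod m →+* R) (f' : ZMod n →+* S) (g : R →+* S) :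
    (Units.map f.toMonoidHom).range ≤
      (Units.map f'.toMonoidHom).range.comap (Units.map g.toMonoidHom) := by
  rintro _ ⟨v, rfl⟩
  refine ⟨Units.map (ZMod.castHom hnm (ZMod n)).toMonoidHom v, Units.ext ?_⟩
  exact RingHom.congr_fun (RingHom.ext_zmod (f'.comp (ZMod.castHom hnm _)) (g.comp f)) v

theorem ZMod.card_units_quotient_range_mul_totient {R : Type*} [CommRing R] {n : ℕ} [NeZero n]
    [CharP R n] (f : ZMod n →+* R) :
    Nat.card (Rˣ ⧸ (Units.map f.toMonoidHom).range) * n.totient = Nat.card Rˣ := by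
  have hinj : Function.Injective (Units.map f.toMonoidHom) := Units.map_injective <| by
    rw [RingHom.ext_zmod f (ZMod.castHom dvd_rfl R)]
    exact ZMod.castHom_injective R
  rw [Subgroup.card_eq_card_quotient_mul_card_subgroup (Units.map f.toMonoidHom).range,
    ← Nat.card_congr (MonoidHom.ofInjective hinj).toEquiv, ← ZMod.card_units_eq_totient,
    Nat.card_eq_fintype_card (α := (ZMod n)ˣ)]

namespace Ideal.Quotient

variable {R : Type*} [CommRing R] {I J : Ideal R} {n : ℕ}

theorem isNilpotent_of_factor_eq_zero (hIJ : I ≤ J) (hn : J ^ n ≤ I) {x : R ⧸ I}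
    (hx : factor hIJ x = 0) : IsNilpotent x := by
  obtain ⟨y, rfl⟩ := mk_surjective x
  rw [factor_mk, eq_zero_iff_mem] at hx
  exact ⟨n, by rw [← map_pow, eq_zero_iff_mem]; exact hn (pow_mem_pow hx n)⟩

theorem units_map_factor_surjective (hIJ : I ≤ J) (hn : J ^ n ≤ I) :
    Function.Surjective (Units.map (factor hIJ).toMonoidHom) :=
  units_map_surjective_of_isNilpotent _ (factor_surjective hIJ)
    fun _ ↦ isNilpotent_of_factor_eq_zero hIJ hn

theorem units_quotientMap_factor_surjective (hIJ : I ≤ J) (hn : J ^ n ≤ I) {a b : ℕ}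
    (hba : b ∣ a) (f : ZMod a →+* R ⧸ I) (f' : ZMod b →+* R ⧸ J) :
    Function.Surjective (QuotientGroup.map _ _ (Units.map (factor hIJ).toMonoidHom)
      (ZMod.units_map_range_le_comap hba f f' (factor hIJ))) :=
  QuotientGroup.map_surjective_of_surjective _ _ _
    (QuotientGroup.mk_surjective.comp (units_map_factor_surjective hIJ hn)) _

theorem card_units_mul_card_eq_of_pow_le [Finite (R ⧸ I)] (hIJ : I ≤ J) (hn : J ^ n ≤ I) :
    Nat.card (R ⧸ I)ˣ * Nat.card (R ⧸ J) = Nat.card (R ⧸ J)ˣ * Nat.card (R ⧸ I) :=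
  card_units_mul_card_eq_of_isNilpotent _ (factor_surjective hIJ)
    fun _ ↦ isNilpotent_of_factor_eq_zero hIJ hn

end Ideal.Quotient

theorem Ideal.span_singleton_pow_sq_le {R : Type*} [CommRing R] (x : R) {m : ℕ} (hm : 1 ≤ m) :
    Ideal.span {x ^ m} ^ 2 ≤ Ideal.span {x ^ (m + 1)} := by
  rw [Ideal.span_singleton_pow, Ideal.span_singleton_le_span_singleton, ← pow_mul]
  exact pow_dvd_pow x (by omega)

theorem Ideal.isRadical_of_squarefree {R : Type*} [CommRing R] [IsDedekindDomain R]
    {I : Ideal R} (hI : Squarefree I) : I.IsRadical := fun r ⟨n, hr⟩ ↦ by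
  rw [← Ideal.dvd_span_singleton, ← Ideal.span_singleton_pow] at hr
  rw [← Ideal.dvd_span_singleton]
  exact hI.isRadical n _ hr

theorem not_dvd_card_units_of_isReduced {R : Type*} [CommRing R] [IsReduced R] [Finite R]
    (p : ℕ) [hp : Fact p.Prime] [CharP R p] : ¬ p ∣ Nat.card Rˣ := by
  intro h
  obtain ⟨u, hu⟩ := exists_prime_orderOf_dvd_card' p h
  have hu1 : u = 1 := Units.ext <| frobenius_inj R p <| by
    rw [Units.val_one, map_one, frobenius_def, ← Units.val_pow_eq_pow_val, ← hu,
      pow_orderOf_eq_one, Units.val_one]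
  rw [hu1, orderOf_one] at hu
  exact hp.out.one_lt.ne hu

namespace CommGroup

variable {G H : Type*} [CommGroup G] [CommGroup H] {p : ℕ}

theorem primaryComponent_eq_sylow (P : Sylow p G) : primaryComponent G p = P :=
  P.is_maximal' primaryComponent.isPGroup fun g hg ↦ mem_primaryComponent.mpr <|
    (P.isPGroup' ⟨g, hg⟩).imp fun _ h ↦ by simpa using congr_arg Subtype.val h

variable [Finite G] [Fact p.Prime]

theorem card_primaryComponent :
    Nat.card (primaryComponent G p) = p ^ (Nat.card G).factorization p := by
  obtain ⟨P⟩ := Sylow.nonempty (p := p) (G := G)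
  rw [primaryComponent_eq_sylow P, P.card_eq_multiplicity]

theorem card_primaryComponent_eq_pow_mul [Finite H] {k : ℕ}
    (h : Nat.card G = p ^ k * Nat.card H) :
    Nat.card (primaryComponent G p) = p ^ k * Nat.card (primaryComponent H p) := by
  rw [card_primaryComponent, card_primaryComponent, h,
    Nat.factorization_mul (pow_ne_zero k (NeZero.ne p)) Nat.card_pos.ne', Finsupp.add_apply,
    (Fact.out : p.Prime).factorization_pow, Finsupp.single_eq_same, pow_add]

theorem map_primaryComponent_of_surjective {θ : G →* H} (hθ : Function.Surjective θ) :
    (primaryComponent G p).map θ = primaryComponent H p := by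
  have : Finite H := Finite.of_surjective θ hθ
  obtain ⟨P⟩ := Sylow.nonempty (p := p) (G := G)
  rw [primaryComponent_eq_sylow P, primaryComponent_eq_sylow (P.mapSurjective hθ),
    Sylow.coe_mapSurjective]

theorem surjective_of_coe_apply_eq {θ : G →* H} (hθ : Function.Surjective θ)
    (π : primaryComponent G p →* primaryComponent H p) (hπ : ∀ x, (π x : H) = θ x) :
    Function.Surjective π := fun y ↦ by
  obtain ⟨x, hx, hxy⟩ := (map_primaryComponent_of_surjective hθ).ge y.2
  exact ⟨⟨x, hx⟩, Subtype.ext ((hπ _).trans hxy)⟩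

theorem card_ker_of_card_eq_pow_mul {θ : G →* H} (hθ : Function.Surjective θ)
    (π : primaryComponent G p →* primaryComponent H p) (hπ : ∀ x, (π x : H) = θ x) {k : ℕ}
    (h : Nat.card G = p ^ k * Nat.card H) : Nat.card π.ker = p ^ k := by
  have : Finite H := Finite.of_surjective θ hθ
  have hcard := π.card_eq_card_ker_mul_of_surjective (surjective_of_coe_apply_eq hθ π hπ)
  rw [card_primaryComponent_eq_pow_mul h] at hcard
  exact (Nat.eq_of_mul_eq_mul_right Nat.card_pos hcard).symm

end CommGroup

section FreeIntAlgebra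

variable {S : Type*} [CommRing S] [Nontrivial S] [Module.Free ℤ S] [Module.Finite ℤ S]

theorem natCast_dvd_natCast_of_free {m n : ℕ} : (m : S) ∣ (n : S) ↔ m ∣ n := by
  refine ⟨fun h ↦ ?_, Nat.cast_dvd_cast⟩
  have h := map_dvd (Algebra.norm ℤ) h
  rw [Algebra.norm_natCast, Algebra.norm_natCast] at h
  exact (Nat.pow_dvd_pow_iff Module.finrank_pos.ne').mp (by exact_mod_cast h)

theorem charP_quotient_span_natCast (n : ℕ) : CharP (S ⧸ Ideal.span {(n : S)}) n :=
  (charP_iff _ _).mpr fun x ↦ by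
    rw [← map_natCast (Ideal.Quotient.mk _), Ideal.Quotient.eq_zero_iff_mem,
      Ideal.mem_span_singleton, natCast_dvd_natCast_of_free]

end FreeIntAlgebra

namespace NumberField.RingOfIntegers

variable {K : Type*} [Field K] [NumberField K]

theorem card_quotient_span_natCast (n : ℕ) :
    Nat.card (𝓞 K ⧸ Ideal.span {(n : 𝓞 K)}) = n ^ Module.finrank ℚ K := by
  rw [← Submodule.cardQuot_apply, ← Ideal.absNorm_apply, Ideal.absNorm_span_natCast,
    RingOfIntegers.rank]

theorem card_quotient_span_pow (ℓ m : ℕ) :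
    Nat.card (𝓞 K ⧸ Ideal.span {(ℓ : 𝓞 K) ^ m}) = ℓ ^ (m * Module.finrank ℚ K) := by
  rw [← Nat.cast_pow, card_quotient_span_natCast, pow_mul]

instance {n : ℕ} [NeZero n] : Finite (𝓞 K ⧸ Ideal.span {(n : 𝓞 K)}) :=
  Nat.finite_of_card_ne_zero <| by
    rw [card_quotient_span_natCast]
    exact pow_ne_zero _ (NeZero.ne n)

instance {ℓ m : ℕ} [NeZero ℓ] : Finite (𝓞 K ⧸ Ideal.span {(ℓ : 𝓞 K) ^ m}) := by
  rw [← Nat.cast_pow]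
  infer_instance

instance (ℓ m : ℕ) : CharP (𝓞 K ⧸ Ideal.span {(ℓ : 𝓞 K) ^ m}) (ℓ ^ m) := by
  rw [← Nat.cast_pow]
  exact charP_quotient_span_natCast _

theorem card_units_quotient_span_pow_succ {ℓ m : ℕ} [NeZero ℓ] (hm : 1 ≤ m) :
    Nat.card (𝓞 K ⧸ Ideal.span {(ℓ : 𝓞 K) ^ (m + 1)})ˣ =
      ℓ ^ Module.finrank ℚ K * Nat.card (𝓞 K ⧸ Ideal.span {(ℓ : 𝓞 K) ^ m})ˣ := by
  have h := Ideal.Quotient.card_units_mul_card_eq_of_pow_le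
    (Ideal.span_singleton_le_span_singleton.mpr (pow_dvd_pow _ m.le_succ))
    (Ideal.span_singleton_pow_sq_le (ℓ : 𝓞 K) hm)
  rw [card_quotient_span_pow, card_quotient_span_pow, Nat.succ_mul, pow_add] at h
  exact Nat.eq_of_mul_eq_mul_right (pow_pos (Nat.pos_of_neZero ℓ) _) (h.trans (by ring))

variable {ℓ : ℕ} [hℓ : Fact ℓ.Prime]

theorem card_units_quotient_range_pow_succ {m : ℕ} (hm : 1 ≤ m)
    (f : ZMod (ℓ ^ m) →+* 𝓞 K ⧸ Ideal.span {(ℓ : 𝓞 K) ^ m})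
    (f' : ZMod (ℓ ^ (m + 1)) →+* 𝓞 K ⧸ Ideal.span {(ℓ : 𝓞 K) ^ (m + 1)}) :
    Nat.card ((𝓞 K ⧸ Ideal.span {(ℓ : 𝓞 K) ^ (m + 1)})ˣ ⧸ (Units.map f'.toMonoidHom).range) =
      ℓ ^ (Module.finrank ℚ K - 1) *
        Nat.card ((𝓞 K ⧸ Ideal.span {(ℓ : 𝓞 K) ^ m})ˣ ⧸ (Units.map f.toMonoidHom).range) := by
  have htot : (ℓ ^ (m + 1)).totient = ℓ * (ℓ ^ m).totient := by
    rw [pow_succ', Nat.totient_mul_of_prime_of_dvd hℓ.out (dvd_pow_self ℓ (by omega))]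
  have h' := ZMod.card_units_quotient_range_mul_totient f'
  rw [card_units_quotient_span_pow_succ hm, ← ZMod.card_units_quotient_range_mul_totient f,
    htot] at h'
  have hr : ℓ ^ Module.finrank ℚ K = ℓ ^ (Module.finrank ℚ K - 1) * ℓ := by
    rw [← pow_succ, Nat.sub_add_cancel Module.finrank_pos]
  refine Nat.eq_of_mul_eq_mul_right
    (Nat.mul_pos hℓ.out.pos (Nat.totient_pos.mpr (pow_pos hℓ.out.pos m))) ?_
  rw [h', hr]
  ring

theorem card_units_quotient_range_pow_one_mul
    (f : ZMod (ℓ ^ 1) →+* 𝓞 K ⧸ Ideal.span {(ℓ : 𝓞 K) ^ 1}) :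
    Nat.card ((𝓞 K ⧸ Ideal.span {(ℓ : 𝓞 K) ^ 1})ˣ ⧸ (Units.map f.toMonoidHom).range) * (ℓ - 1) =
      Nat.card (𝓞 K ⧸ Ideal.span {(ℓ : 𝓞 K)})ˣ := by
  conv_rhs => rw [← pow_one (ℓ : 𝓞 K)]
  simpa [Nat.totient_prime hℓ.out] using ZMod.card_units_quotient_range_mul_totient f

/-- A square factor `M²` of `I` has norm `p²`, which forces `I = M²`. -/
theorem squarefree_of_absNorm_eq_sq {I : Ideal (𝓞 K)} {p : ℕ} (hp : p.Prime)
    (hI : Ideal.absNorm I = p ^ 2) (h : ¬ ∃ P : Ideal (𝓞 K), P.IsPrime ∧ I = P ^ 2) :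
    Squarefree I := by
  intro J hJ
  by_contra hJu
  obtain ⟨M, hM, hJM⟩ := Ideal.exists_le_maximal J (fun h ↦ hJu (Ideal.isUnit_iff.mpr h))
  have hMJ : M ∣ J := Ideal.dvd_iff_le.mpr hJM
  obtain ⟨C, rfl⟩ := (mul_dvd_mul hMJ hMJ).trans hJ
  have hnorm : Ideal.absNorm M ^ 2 * Ideal.absNorm C = p ^ 2 := by
    rw [← hI, map_mul, map_mul, sq]
  have hMdvd : Ideal.absNorm M ∣ p := (Nat.pow_dvd_pow_iff two_ne_zero).mp (Dvd.intro _ hnorm)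
  have hMp : Ideal.absNorm M = p := (hp.eq_one_or_self_of_dvd _ hMdvd).resolve_left
    fun h ↦ hM.ne_top (Ideal.absNorm_eq_one_iff.mp h)
  have hC : Ideal.absNorm C = 1 := by
    rw [hMp] at hnorm
    exact (Nat.mul_eq_left (pow_ne_zero 2 hp.ne_zero)).mp hnorm
  exact h ⟨M, hM.isPrime, by rw [Ideal.absNorm_eq_one_iff.mp hC, Ideal.mul_top, sq]⟩

theorem card_units_quotient_span_of_eq_sq (hdeg : Module.finrank ℚ K = 2) {P : Ideal (𝓞 K)}
    (hP : P.IsPrime) (h : Ideal.span {(ℓ : 𝓞 K)} = P ^ 2) :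
    Nat.card (𝓞 K ⧸ Ideal.span {(ℓ : 𝓞 K)})ˣ = (ℓ - 1) * ℓ := by
  have hcard : Nat.card (𝓞 K ⧸ P ^ 2) = ℓ ^ 2 := by rw [← h, card_quotient_span_natCast, hdeg]
  have hNP : Ideal.absNorm P = ℓ := by
    refine Nat.pow_left_injective two_ne_zero (?_ : Ideal.absNorm P ^ 2 = ℓ ^ 2)
    rw [← map_pow, Ideal.absNorm_apply, Submodule.cardQuot_apply, hcard]
  have : P.IsMaximal :=
    hP.isMaximal fun hP0 ↦ hℓ.out.ne_zero (by rw [← hNP, hP0, Ideal.absNorm_bot])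
  let _ : Field (𝓞 K ⧸ P) := Ideal.Quotient.field P
  have hcardP : Nat.card (𝓞 K ⧸ P) = ℓ := by
    rw [← Submodule.cardQuot_apply, ← Ideal.absNorm_apply, hNP]
  have : Finite (𝓞 K ⧸ P ^ 2) :=
    Nat.finite_of_card_ne_zero (by rw [hcard]; exact pow_ne_zero 2 hℓ.out.ne_zero)
  have key := Ideal.Quotient.card_units_mul_card_eq_of_pow_le (I := P ^ 2)
    (Ideal.pow_le_self two_ne_zero) le_rfl
  rw [hcard, Nat.card_units, hcardP] at key
  rw [h]
  exact Nat.eq_of_mul_eq_mul_right hℓ.out.pos (key.trans (by ring))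

theorem not_dvd_card_units_quotient_span (hdeg : Module.finrank ℚ K = 2)
    (h : ¬ ∃ P : Ideal (𝓞 K), P.IsPrime ∧ Ideal.span {(ℓ : 𝓞 K)} = P ^ 2) :
    ¬ ℓ ∣ Nat.card (𝓞 K ⧸ Ideal.span {(ℓ : 𝓞 K)})ˣ := by
  have hsq := squarefree_of_absNorm_eq_sq hℓ.out (by
    rw [Ideal.absNorm_apply, Submodule.cardQuot_apply, card_quotient_span_natCast, hdeg]) h
  have : IsReduced (𝓞 K ⧸ Ideal.span {(ℓ : 𝓞 K)}) :=
    (Ideal.isRadical_iff_quotient_reduced _).mp (Ideal.isRadical_of_squarefree hsq)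
  have : CharP (𝓞 K ⧸ Ideal.span {(ℓ : 𝓞 K)}) ℓ := charP_quotient_span_natCast ℓ
  exact not_dvd_card_units_of_isReduced ℓ

theorem card_primaryComponent_of_eq_sq (hdeg : Module.finrank ℚ K = 2) {P : Ideal (𝓞 K)}
    (hP : P.IsPrime) (h : Ideal.span {(ℓ : 𝓞 K)} = P ^ 2)
    (f : ZMod (ℓ ^ 1) →+* 𝓞 K ⧸ Ideal.span {(ℓ : 𝓞 K) ^ 1}) :
    Nat.card (CommGroup.primaryComponent
      ((𝓞 K ⧸ Ideal.span {(ℓ : 𝓞 K) ^ 1})ˣ ⧸ (Units.map f.toMonoidHom).range) ℓ) = ℓ := by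
  have hcard := card_units_quotient_range_pow_one_mul f
  rw [card_units_quotient_span_of_eq_sq hdeg hP h, mul_comm] at hcard
  rw [CommGroup.card_primaryComponent,
    Nat.eq_of_mul_eq_mul_left (Nat.sub_pos_of_lt hℓ.out.one_lt) hcard,
    hℓ.out.factorization_self, pow_one]

theorem card_primaryComponent_of_not_eq_sq (hdeg : Module.finrank ℚ K = 2)
    (h : ¬ ∃ P : Ideal (𝓞 K), P.IsPrime ∧ Ideal.span {(ℓ : 𝓞 K)} = P ^ 2)
    (f : ZMod (ℓ ^ 1) →+* 𝓞 K ⧸ Ideal.span {(ℓ : 𝓞 K) ^ 1}) :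
    Nat.card (CommGroup.primaryComponent
      ((𝓞 K ⧸ Ideal.span {(ℓ : 𝓞 K) ^ 1})ˣ ⧸ (Units.map f.toMonoidHom).range) ℓ) = 1 := by
  have hdvd := Dvd.intro _ (card_units_quotient_range_pow_one_mul f)
  rw [CommGroup.card_primaryComponent, Nat.factorization_eq_zero_of_not_dvd
    fun hℓdvd ↦ not_dvd_card_units_quotient_span hdeg h (hℓdvd.trans hdvd), pow_zero]

end NumberField.RingOfIntegers

theorem ker_pi_prime_d_general
    {K : Type*} [Field K] [NumberField K]
    (hdeg : Module.finrank ℚ K = 2)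
    (ℓ : ℕ) (hℓ : ℓ.Prime) (d : ℕ)
    (f : ∀ m : ℕ, ZMod (ℓ ^ m) →+* (𝓞 K ⧸ Ideal.span {(ℓ : 𝓞 K) ^ m}))
    (g : (𝓞 K ⧸ Ideal.span {(ℓ : 𝓞 K) ^ (d + 1)}) →+*
         (𝓞 K ⧸ Ideal.span {(ℓ : 𝓞 K) ^ d}))
    (hg : ∀ x : 𝓞 K,
      g (Ideal.Quotient.mk (Ideal.span {(ℓ : 𝓞 K) ^ (d + 1)}) x) =
        Ideal.Quotient.mk (Ideal.span {(ℓ : 𝓞 K) ^ d}) x)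
    (κ : ∀ m : ℕ,
      Subgroup ((𝓞 K ⧸ Ideal.span {(ℓ : 𝓞 K) ^ m})ˣ ⧸ (Units.map (f m).toMonoidHom).range))
    (hκ : ∀ m : ℕ,
      ∀ x : (𝓞 K ⧸ Ideal.span {(ℓ : 𝓞 K) ^ m})ˣ ⧸ (Units.map (f m).toMonoidHom).range,
        x ∈ κ m ↔ ∃ n : ℕ, orderOf x = ℓ ^ n)
    (π' : κ (d + 1) →* κ d)
    (hπ' : ∀ (x : κ (d + 1)) (u : (𝓞 K ⧸ Ideal.span {(ℓ : 𝓞 K) ^ (d + 1)})ˣ),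
      (QuotientGroup.mk u :
          (𝓞 K ⧸ Ideal.span {(ℓ : 𝓞 K) ^ (d + 1)})ˣ ⧸ (Units.map (f (d + 1)).toMonoidHom).range) =
        (x : (𝓞 K ⧸ Ideal.span {(ℓ : 𝓞 K) ^ (d + 1)})ˣ ⧸ (Units.map (f (d + 1)).toMonoidHom).range) →
      ((π' x : (𝓞 K ⧸ Ideal.span {(ℓ : 𝓞 K) ^ d})ˣ ⧸ (Units.map (f d).toMonoidHom).range)) =
        QuotientGroup.mk (Units.map g.toMonoidHom u)) :
    (d = 0 →
      ((∃ P : Ideal (𝓞 K), P.IsPrime ∧ Ideal.span {(ℓ : 𝓞 K)} = P ^ 2) →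
        IsCyclic π'.ker ∧ Nat.card π'.ker = ℓ) ∧
      (¬ (∃ P : Ideal (𝓞 K), P.IsPrime ∧ Ideal.span {(ℓ : 𝓞 K)} = P ^ 2) →
        π'.ker = ⊥)) ∧
    (1 ≤ d → IsCyclic π'.ker ∧ Nat.card π'.ker = ℓ) := by
  have : Fact ℓ.Prime := ⟨hℓ⟩
  obtain rfl : κ = fun m ↦ CommGroup.primaryComponent
      ((𝓞 K ⧸ Ideal.span {(ℓ : 𝓞 K) ^ m})ˣ ⧸ (Units.map (f m).toMonoidHom).range) ℓ :=
    funext fun m ↦ Subgroup.ext fun x ↦ by rw [hκ, CommGroup.mem_primaryComponent_iff_orderOf]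
  refine ⟨fun hd ↦ ?_, fun hd ↦ ?_⟩
  · subst hd
    have : Subsingleton (𝓞 K ⧸ Ideal.span {(ℓ : 𝓞 K) ^ 0}) := by
      rw [pow_zero, Ideal.span_singleton_one]
      infer_instance
    have hker : π'.ker = ⊤ :=
      MonoidHom.ker_eq_top_iff.mpr (MonoidHom.ext fun _ ↦ Subtype.ext (Subsingleton.elim _ _))
    refine ⟨fun ⟨P, hP, hPℓ⟩ ↦ ?_, fun hunram ↦ ?_⟩
    · have hcard : Nat.card π'.ker = ℓ := by
        rw [hker, Subgroup.card_top]
        exact RingOfIntegers.card_primaryComponent_of_eq_sq hdeg hP hPℓ (f (0 + 1))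
      exact ⟨isCyclic_of_prime_card hcard, hcard⟩
    · rw [← Subgroup.card_eq_one, hker, Subgroup.card_top]
      exact RingOfIntegers.card_primaryComponent_of_not_eq_sq hdeg hunram (f (0 + 1))
  · have hle : Ideal.span {(ℓ : 𝓞 K) ^ (d + 1)} ≤ Ideal.span {(ℓ : 𝓞 K) ^ d} :=
      Ideal.span_singleton_le_span_singleton.mpr (pow_dvd_pow _ d.le_succ)
    obtain rfl : g = Ideal.Quotient.factor hle := Ideal.Quotient.ringHom_ext (RingHom.ext hg)
    have hθ := Ideal.Quotient.units_quotientMap_factor_surjective hle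
      (Ideal.span_singleton_pow_sq_le _ hd) (pow_dvd_pow ℓ d.le_succ) (f (d + 1)) (f d)
    have hcard : Nat.card π'.ker = ℓ ^ (Module.finrank ℚ K - 1) := by
      refine CommGroup.card_ker_of_card_eq_pow_mul hθ π' (fun x ↦ ?_)
        (RingOfIntegers.card_units_quotient_range_pow_succ hd (f d) (f (d + 1)))
      obtain ⟨u, hu⟩ := QuotientGroup.mk_surjective
        (x : (𝓞 K ⧸ Ideal.span {(ℓ : 𝓞 K) ^ (d + 1)})ˣ ⧸ (Units.map (f (d + 1)).toMonoidHom).range)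
      rw [hπ' x u hu, ← hu, QuotientGroup.map_mk]
    rw [hdeg, pow_one] at hcard
    exact ⟨isCyclic_of_prime_card hcard, hcard⟩

/-- Let `ℓ` be a prime and `K` an imaginary quadratic field.  For
`m ≥ 0` let `λ_m` be the cokernel of the natural map `(ℤ/ℓ^mℤ)ˣ → (O_K/ℓ^mO_K)ˣ`,
let `κ_m` be the Sylow `ℓ`-subgroup of `λ_m`, and let `π′_d : κ_{d+1} → κ_d` be the
homomorphism induced by the reduction map `O_K/ℓ^{d+1}O_K → O_K/ℓ^dO_K`.  Then
`ker π′_0` is cyclic of order `ℓ` if `ℓ` is ramified in `O_K` and trivial otherwise;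
and for every `d ≥ 1`, `ker π′_d` is cyclic of order `ℓ`. -/
theorem ker_pi_prime_d
    {K : Type*} [Field K] [NumberField K]
    (hdeg : Module.finrank ℚ K = 2) (hneg : NumberField.discr K < 0)
    (ℓ : ℕ) (hℓ : ℓ.Prime) (d : ℕ)
    (f : ∀ m : ℕ, ZMod (ℓ ^ m) →+* (𝓞 K ⧸ Ideal.span {(ℓ : 𝓞 K) ^ m}))
    (g : (𝓞 K ⧸ Ideal.span {(ℓ : 𝓞 K) ^ (d + 1)}) →+*
         (𝓞 K ⧸ Ideal.span {(ℓ : 𝓞 K) ^ d}))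
    (hg : ∀ x : 𝓞 K,
      g (Ideal.Quotient.mk (Ideal.span {(ℓ : 𝓞 K) ^ (d + 1)}) x) =
        Ideal.Quotient.mk (Ideal.span {(ℓ : 𝓞 K) ^ d}) x)
    (κ : ∀ m : ℕ,
      Subgroup ((𝓞 K ⧸ Ideal.span {(ℓ : 𝓞 K) ^ m})ˣ ⧸ (Units.map (f m).toMonoidHom).range))
    (hκ : ∀ m : ℕ,
      ∀ x : (𝓞 K ⧸ Ideal.span {(ℓ : 𝓞 K) ^ m})ˣ ⧸ (Units.map (f m).toMonoidHom).range,
        x ∈ κ m ↔ ∃ n : ℕ, orderOf x = ℓ ^ n)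
    (π' : κ (d + 1) →* κ d)
    (hπ' : ∀ (x : κ (d + 1)) (u : (𝓞 K ⧸ Ideal.span {(ℓ : 𝓞 K) ^ (d + 1)})ˣ),
      (QuotientGroup.mk u :
          (𝓞 K ⧸ Ideal.span {(ℓ : 𝓞 K) ^ (d + 1)})ˣ ⧸ (Units.map (f (d + 1)).toMonoidHom).range) =
        (x : (𝓞 K ⧸ Ideal.span {(ℓ : 𝓞 K) ^ (d + 1)})ˣ ⧸ (Units.map (f (d + 1)).toMonoidHom).range) →
      ((π' x : (𝓞 K ⧸ Ideal.span {(ℓ : 𝓞 K) ^ d})ˣ ⧸ (Units.map (f d).toMonoidHom).range)) =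
        QuotientGroup.mk (Units.map g.toMonoidHom u)) :
    (d = 0 →
      ((∃ P : Ideal (𝓞 K), P.IsPrime ∧ Ideal.span {(ℓ : 𝓞 K)} = P ^ 2) →
        IsCyclic π'.ker ∧ Nat.card π'.ker = ℓ) ∧
      (¬ (∃ P : Ideal (𝓞 K), P.IsPrime ∧ Ideal.span {(ℓ : 𝓞 K)} = P ^ 2) →
        π'.ker = ⊥)) ∧
    (1 ≤ d → IsCyclic π'.ker ∧ Nat.card π'.ker = ℓ) :=
  ker_pi_prime_d_general hdeg ℓ hℓ d f g hg κ hκ π' hπ'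
end
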